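/- arXiv:2302.03511 — 10 statements merged into one kernel-verified Lean document; each statement's English description precedes it below -/
import Mathlib

section
/- For every ε ≥ 0, the function φ_ε : (0,∞) → ℝ defined by φ_ε(a) = Q(ε/a − a/2) − e^ε · Q(ε/a + a/2) is strictly monotonically increasing on (0,∞): for all 0 < a < a', φ_ε(a) < φ_ε(a'). -/
open MeasureTheory Real

/-- The complementary CDF (survival function) of the standard Gaussian distribution. -/
noncomputable def Q (x : ℝ) : ℝ :=
  (Real.sqrt (2 * Real.pi))⁻¹ * ∫ t in Set.Ioi x, Real.exp (-t ^ 2 / 2)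

/-- `φ_ε(a) = Q(ε/a − a/2) − e^ε · Q(ε/a + a/2)`. -/
noncomputable def phi (ε a : ℝ) : ℝ :=
  Q (ε / a - a / 2) - Real.exp ε * Q (ε / a + a / 2)

noncomputable def g (x : ℝ) : ℝ := (Real.sqrt (2 * Real.pi))⁻¹ * Real.exp (-x ^ 2 / 2)

lemma g_pos (x : ℝ) : 0 < g x := by
  have : 0 < Real.sqrt (2 * Real.pi) := Real.sqrt_pos.2 (by positivity)
  exact mul_pos (inv_pos.2 this) (Real.exp_pos _)

lemma gauss_integrable : Integrable (fun t : ℝ => Real.exp (-t ^ 2 / 2)) := by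
  have := integrable_exp_neg_mul_sq (b := (1:ℝ)/2) (by norm_num)
  convert this using 2 with t
  ring_nf

lemma Q_eq (x : ℝ) :
    Q x = Q 0 - (Real.sqrt (2 * Real.pi))⁻¹ * ∫ t in (0:ℝ)..x, Real.exp (-t ^ 2 / 2) := by
  have hi := gauss_integrable
  have h1 : ∀ y : ℝ, (∫ t in Set.Iic y, Real.exp (-t ^ 2 / 2)) +
      (∫ t in Set.Ioi y, Real.exp (-t ^ 2 / 2)) = ∫ t : ℝ, Real.exp (-t ^ 2 / 2) :=
    fun y => intervalIntegral.integral_Iic_add_Ioi hi.integrableOn hi.integrableOn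
  have h2 := intervalIntegral.integral_Iic_sub_Iic (μ := volume) (a := (0:ℝ)) (b := x)
    (f := fun t : ℝ => Real.exp (-t ^ 2 / 2)) hi.integrableOn hi.integrableOn
  have hx := h1 x; have h0 := h1 0
  unfold Q
  rw [← h2]
  have e1 : (∫ t in Set.Ioi x, Real.exp (-t ^ 2 / 2)) =
      (∫ t in Set.Ioi (0:ℝ), Real.exp (-t ^ 2 / 2)) -
      ((∫ t in Set.Iic x, Real.exp (-t ^ 2 / 2)) -
       ∫ t in Set.Iic (0:ℝ), Real.exp (-t ^ 2 / 2)) := by linarith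
  rw [e1]
  ring

lemma hasDerivAt_Q (x : ℝ) : HasDerivAt Q (-(g x)) x := by
  have hi := gauss_integrable
  have hd : HasDerivAt (fun u => ∫ t in (0:ℝ)..u, Real.exp (-t ^ 2 / 2))
      (Real.exp (-x ^ 2 / 2)) x := by
    apply intervalIntegral.integral_hasDerivAt_right hi.intervalIntegrable
    · exact (Continuous.stronglyMeasurable (by continuity)).stronglyMeasurableAtFilter
    · exact (by continuity : Continuous fun t : ℝ => Real.exp (-t ^ 2 / 2)).continuousAt
  have : HasDerivAt (fun u => Q 0 - (Real.sqrt (2 * Real.pi))⁻¹ *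
      ∫ t in (0:ℝ)..u, Real.exp (-t ^ 2 / 2))
      (-(g x)) x := by
    have := ((hd.const_mul ((Real.sqrt (2 * Real.pi))⁻¹)).const_sub (Q 0))
    simpa [g] using this
  exact this.congr_of_eventuallyEq (Filter.Eventually.of_forall fun y => Q_eq y)

lemma hasDerivAt_phi (ε a : ℝ) (ha : 0 < a) :
    HasDerivAt (phi ε) (g (ε / a - a / 2)) a := by
  have ha' : a ≠ 0 := ha.ne'
  have hinv : HasDerivAt (fun x : ℝ => ε / x) (-(ε / a ^ 2)) a := by
    have := (hasDerivAt_inv ha').const_mul ε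
    simp only [div_eq_mul_inv]
    exact this.congr_deriv (by ring)
  have h1 : HasDerivAt (fun x : ℝ => ε / x - x / 2) (-(ε / a ^ 2) - 1 / 2) a := by
    exact hinv.sub ((hasDerivAt_id' a).div_const 2)
  have h2 : HasDerivAt (fun x : ℝ => ε / x + x / 2) (-(ε / a ^ 2) + 1 / 2) a := by
    exact hinv.add ((hasDerivAt_id' a).div_const 2)
  have hQ1 := (hasDerivAt_Q (ε / a - a / 2)).comp a h1
  have hQ2 := ((hasDerivAt_Q (ε / a + a / 2)).comp a h2).const_mul (Real.exp ε)
  have key : Real.exp ε * Real.exp (-(ε / a + a / 2) ^ 2 / 2) =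
      Real.exp (-(ε / a - a / 2) ^ 2 / 2) := by
    rw [← Real.exp_add]
    congr 1
    field_simp
    ring
  have hgv : Real.exp ε * g (ε / a + a / 2) = g (ε / a - a / 2) := by
    unfold g
    rw [mul_left_comm, key]
  have h := hQ1.sub hQ2
  convert h using 1
  case e'_4 => rfl
  case e'_5 => rfl
  case e'_8 => rfl
  have e2 : Real.exp ε * (-g (ε / a + a / 2) * (-(ε / a ^ 2) + 1 / 2)) =
      -g (ε / a - a / 2) * (-(ε / a ^ 2) + 1 / 2) := by
    rw [← hgv]; ring
  rw [e2]; ring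

/-- For every `ε ≥ 0`, the function `φ_ε` is strictly monotonically increasing on `(0,∞)`. -/
theorem phi_strictMonoOn (ε : ℝ) (hε : 0 ≤ ε) (a a' : ℝ) (ha : 0 < a) (haa' : a < a') :
    phi ε a < phi ε a' := by
  have h : StrictMonoOn (phi ε) (Set.Ioi 0) := by
    apply strictMonoOn_of_deriv_pos (convex_Ioi 0)
    · exact fun x hx => (hasDerivAt_phi ε x hx).continuousAt.continuousWithinAt
    · intro x hx
      rw [interior_Ioi] at hx
      rw [(hasDerivAt_phi ε x hx).deriv]
      exact g_pos _
  exact h (Set.mem_Ioi.2 ha) (Set.mem_Ioi.2 (ha.trans haa')) haa'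
end

section
/- For every ε ≥ 0 and every a > 0, the function φ_ε(a) = Q(ε/a − a/2) − e^ε · Q(ε/a + a/2) is differentiable at a with derivative φ_ε'(a) = (1/√(2π)) · exp(−(ε/a − a/2)²/2). -/
open MeasureTheory Real

lemma Q_hasDerivAt (x : ℝ) :
    HasDerivAt Q (-((Real.sqrt (2 * Real.pi))⁻¹ * Real.exp (-x ^ 2 / 2))) x := by
  set f : ℝ → ℝ := fun t => Real.exp (-t ^ 2 / 2) with hf
  have hint : Integrable f := gauss_integrable
  have hQ : ∀ y : ℝ, Q y = (Real.sqrt (2 * Real.pi))⁻¹ *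
      ((∫ t, f t) - (∫ t in Set.Iic (0:ℝ), f t) - ∫ t in (0:ℝ)..y, f t) := by
    intro y
    unfold Q
    congr 1
    have h1 : (∫ t in Set.Iic y, f t) + ∫ t in Set.Ioi y, f t = ∫ t, f t := by
      rw [← setIntegral_union (Set.Iic_disjoint_Ioi le_rfl) measurableSet_Ioi
        hint.integrableOn hint.integrableOn, Set.Iic_union_Ioi, setIntegral_univ]
    have h2 : ∫ t in (0:ℝ)..y, f t = (∫ t in Set.Iic y, f t) - ∫ t in Set.Iic (0:ℝ), f t :=
      (intervalIntegral.integral_Iic_sub_Iic hint.integrableOn hint.integrableOn).symm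
    rw [h2]
    linarith
  have hd : HasDerivAt (fun u => ∫ t in (0:ℝ)..u, f t) (f x) x :=
    intervalIntegral.integral_hasDerivAt_right hint.intervalIntegrable
      hint.aestronglyMeasurable.stronglyMeasurableAtFilter
      (by fun_prop)
  have : HasDerivAt (fun y => (Real.sqrt (2 * Real.pi))⁻¹ *
      ((∫ t, f t) - (∫ t in Set.Iic (0:ℝ), f t) - ∫ t in (0:ℝ)..y, f t))
      (-((Real.sqrt (2 * Real.pi))⁻¹ * f x)) x := by
    have := ((hasDerivAt_const x ((∫ t, f t) - (∫ t in Set.Iic (0:ℝ), f t))).sub hd).const_mul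
      ((Real.sqrt (2 * Real.pi))⁻¹)
    simpa [mul_comm, mul_sub] using this
  exact this.congr_of_eventuallyEq (by filter_upwards with y using hQ y)

/-- For every `ε ≥ 0` and every `a > 0`, `φ_ε` is differentiable at `a` with derivative
`(1/√(2π)) · exp(−(ε/a − a/2)²/2)`. -/
theorem phi_hasDerivAt (ε : ℝ) (hε : 0 ≤ ε) (a : ℝ) (ha : 0 < a) :
    HasDerivAt (fun x => phi ε x)
      ((Real.sqrt (2 * Real.pi))⁻¹ * Real.exp (-(ε / a - a / 2) ^ 2 / 2)) a := by
  have ha' : a ≠ 0 := ha.ne'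
  set c := (Real.sqrt (2 * Real.pi))⁻¹
  have hu : HasDerivAt (fun x => ε / x - x / 2) (-ε / a ^ 2 - 1 / 2) a := by
    have := (((hasDerivAt_inv ha').const_mul ε).sub ((hasDerivAt_id a).div_const 2))
    simp only [div_eq_mul_inv] at *
    exact this.congr_deriv (by ring)
  have hv : HasDerivAt (fun x => ε / x + x / 2) (-ε / a ^ 2 + 1 / 2) a := by
    have := (((hasDerivAt_inv ha').const_mul ε).add ((hasDerivAt_id a).div_const 2))
    simp only [div_eq_mul_inv] at *
    exact this.congr_deriv (by ring)
  have h1 : HasDerivAt (fun x => Q (ε / x - x / 2))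
      (-(c * Real.exp (-(ε / a - a / 2) ^ 2 / 2)) * (-ε / a ^ 2 - 1 / 2)) a :=
    (Q_hasDerivAt (ε / a - a / 2)).comp (h := fun x => ε / x - x / 2) a hu
  have h2 : HasDerivAt (fun x => Real.exp ε * Q (ε / x + x / 2))
      (Real.exp ε * (-(c * Real.exp (-(ε / a + a / 2) ^ 2 / 2)) * (-ε / a ^ 2 + 1 / 2))) a :=
    (((Q_hasDerivAt (ε / a + a / 2)).comp (h := fun x => ε / x + x / 2) a hv)).const_mul (Real.exp ε)
  have key : Real.exp ε * Real.exp (-(ε / a + a / 2) ^ 2 / 2)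
      = Real.exp (-(ε / a - a / 2) ^ 2 / 2) := by
    rw [← Real.exp_add]
    congr 1
    field_simp
    ring
  have := h1.sub h2
  refine this.congr_deriv ?_
  have h3 : Real.exp ε * (-(c * Real.exp (-(ε / a + a / 2) ^ 2 / 2)) * (-ε / a ^ 2 + 1 / 2))
      = -(c * Real.exp (-(ε / a - a / 2) ^ 2 / 2)) * (-ε / a ^ 2 + 1 / 2) := by
    rw [← key]; ring
  rw [h3]; ring
end

section
/- For every ε ≥ 0 and every δ ∈ (0,1), there exists a unique μ₀ > 0 such that φ_ε(μ₀) = δ, i.e. Q(ε/μ₀ − μ₀/2) − e^ε · Q(ε/μ₀ + μ₀/2) = δ. Moreover, for every μ ∈ (0, μ₀], φ_ε(μ) ≤ δ, and for every μ > μ₀, φ_ε(μ) > δ. -/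
open MeasureTheory Real Filter

namespace PhiAux

noncomputable def g (t : ℝ) : ℝ := Real.exp (-t ^ 2 / 2)

lemma g_cont : Continuous g := by unfold g; fun_prop

lemma g_int : Integrable g := by
  have h := integrable_exp_neg_mul_sq (by norm_num : (0:ℝ) < 1/2)
  exact h.congr (Filter.Eventually.of_forall fun t => congrArg Real.exp (by ring))

lemma g_total : ∫ t : ℝ, g t = Real.sqrt (2 * Real.pi) := by
  have h := integral_gaussian (1/2 : ℝ)
  have h2 : ∫ t : ℝ, g t = ∫ x : ℝ, Real.exp (-(1/2) * x ^ 2) := by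
    congr 1; funext t; exact congrArg Real.exp (by ring)
  rw [h2, h]
  norm_num
  rw [mul_comm]

lemma c_pos : 0 < (Real.sqrt (2 * Real.pi))⁻¹ := by
  have : (0:ℝ) < 2 * Real.pi := by positivity
  positivity

lemma Q_def (x : ℝ) : Q x = (Real.sqrt (2 * Real.pi))⁻¹ * ∫ t in Set.Ioi x, g t := rfl

lemma Q_nonneg (x : ℝ) : 0 ≤ Q x :=
  mul_nonneg c_pos.le (setIntegral_nonneg measurableSet_Ioi fun t _ => (Real.exp_pos _).le)

lemma Q_eq (z : ℝ) : Q z = (Real.sqrt (2 * Real.pi))⁻¹ *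
    ((∫ t : ℝ, g t) - ((∫ t in Set.Iic (0:ℝ), g t) + ∫ t in (0:ℝ)..z, g t)) := by
  have h1 : (∫ t in Set.Iic z, g t) + ∫ t in Set.Ioi z, g t = ∫ t : ℝ, g t :=
    intervalIntegral.integral_Iic_add_Ioi g_int.integrableOn g_int.integrableOn
  have h2 : (∫ t in Set.Iic z, g t) - ∫ t in Set.Iic (0:ℝ), g t = ∫ t in (0:ℝ)..z, g t :=
    intervalIntegral.integral_Iic_sub_Iic g_int.integrableOn g_int.integrableOn
  unfold Q
  have : ∫ t in Set.Ioi z, g t = (∫ t : ℝ, g t) - ((∫ t in Set.Iic (0:ℝ), g t) + ∫ t in (0:ℝ)..z, g t) := by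
    rw [← h2, ← h1]; ring
  rw [← this]; rfl

lemma Q_hasDeriv (x : ℝ) :
    HasDerivAt Q (-((Real.sqrt (2 * Real.pi))⁻¹ * Real.exp (-x ^ 2 / 2))) x := by
  have hd : HasDerivAt (fun z : ℝ => ∫ t in (0:ℝ)..z, g t) (g x) x :=
    intervalIntegral.integral_hasDerivAt_right g_int.intervalIntegrable
      (g_cont.stronglyMeasurableAtFilter _ _) g_cont.continuousAt
  have H : HasDerivAt (fun z : ℝ => (Real.sqrt (2 * Real.pi))⁻¹ *
      ((∫ t : ℝ, g t) - ((∫ t in Set.Iic (0:ℝ), g t) + ∫ t in (0:ℝ)..z, g t)))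
      ((Real.sqrt (2 * Real.pi))⁻¹ * (0 - (0 + g x))) x :=
    (((hasDerivAt_const x _).sub ((hasDerivAt_const x _).add hd)).const_mul _)
  have hQeq : Q = fun z : ℝ => (Real.sqrt (2 * Real.pi))⁻¹ *
      ((∫ t : ℝ, g t) - ((∫ t in Set.Iic (0:ℝ), g t) + ∫ t in (0:ℝ)..z, g t)) :=
    funext Q_eq
  rw [hQeq]
  convert H using 1
  unfold g; ring

lemma Q_cont : Continuous Q :=
  continuous_iff_continuousAt.2 fun x => (Q_hasDeriv x).continuousAt

lemma phi_hasDeriv (ε a : ℝ) (ha : 0 < a) :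
    HasDerivAt (phi ε) ((Real.sqrt (2 * Real.pi))⁻¹ * Real.exp (-(ε / a - a / 2) ^ 2 / 2)) a := by
  have h1 : HasDerivAt (fun z : ℝ => ε / z - z / 2) (-ε / a ^ 2 - 1 / 2) a := by
    have := ((hasDerivAt_const a ε).div (hasDerivAt_id a) ha.ne').sub
      ((hasDerivAt_id a).div_const 2)
    refine this.congr_deriv ?_
    simp only [id]
    field_simp
    ring
  have h2 : HasDerivAt (fun z : ℝ => ε / z + z / 2) (-ε / a ^ 2 + 1 / 2) a := by
    have := ((hasDerivAt_const a ε).div (hasDerivAt_id a) ha.ne').add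
      ((hasDerivAt_id a).div_const 2)
    refine this.congr_deriv ?_
    simp only [id]
    field_simp
    ring
  have hu := (Q_hasDeriv (ε / a - a / 2)).comp a h1
  have hv := ((Q_hasDeriv (ε / a + a / 2)).comp a h2).const_mul (Real.exp ε)
  have H := hu.sub hv
  have hphi : phi ε = fun z : ℝ => Q (ε / z - z / 2) - Real.exp ε * Q (ε / z + z / 2) := rfl
  rw [hphi]
  refine H.congr_deriv ?_
  have hexp : Real.exp ε * Real.exp (-(ε / a + a / 2) ^ 2 / 2)
      = Real.exp (-(ε / a - a / 2) ^ 2 / 2) := by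
    rw [← Real.exp_add]; congr 1; field_simp; ring
  have ha2 : a ^ 2 ≠ 0 := pow_ne_zero _ ha.ne'
  linear_combination (-((Real.sqrt (2 * Real.pi))⁻¹ * (ε / a ^ 2 - 1 / 2))) * hexp

lemma phi_strictMono (ε : ℝ) : StrictMonoOn (phi ε) (Set.Ioi 0) := by
  apply strictMonoOn_of_deriv_pos (convex_Ioi 0)
  · exact fun a ha => (phi_hasDeriv ε a ha).continuousAt.continuousWithinAt
  · intro a ha
    rw [interior_Ioi] at ha
    rw [(phi_hasDeriv ε a ha).deriv]
    have : (0:ℝ) < 2 * Real.pi := by positivity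
    positivity

lemma Q_tendsto_atTop : Tendsto Q atTop (nhds 0) := by
  have key : Tendsto (fun x : ℝ => ∫ t in Set.Ioi x, g t) atTop (nhds 0) := by
    have h0 : (0:ℝ) = ∫ t : ℝ, (0:ℝ) := by simp
    rw [h0]
    have : ∀ x : ℝ, ∫ t in Set.Ioi x, g t = ∫ t : ℝ, (Set.Ioi x).indicator g t := by
      intro x; rw [integral_indicator measurableSet_Ioi]
    simp_rw [this]
    apply tendsto_integral_filter_of_dominated_convergence g
    · exact Eventually.of_forall fun x =>
        (g_cont.aestronglyMeasurable).indicator measurableSet_Ioi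
    · exact Eventually.of_forall fun x => Eventually.of_forall fun t =>
        le_trans (norm_indicator_le_norm_self g t)
          (le_of_eq (Real.norm_of_nonneg (Real.exp_pos _).le))
    · exact g_int
    · refine Eventually.of_forall fun t => ?_
      apply tendsto_const_nhds.congr'
      filter_upwards [eventually_ge_atTop t] with x hx
      simp [Set.indicator_of_notMem, Set.mem_Ioi, not_lt.2 hx]
  have h2 := key.const_mul (Real.sqrt (2 * Real.pi))⁻¹
  rw [mul_zero] at h2
  exact h2.congr fun x => (Q_def x).symm

lemma Q_tendsto_atBot : Tendsto Q atBot (nhds 1) := by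
  have key : Tendsto (fun x : ℝ => ∫ t in Set.Ioi x, g t) atBot
      (nhds (∫ t : ℝ, g t)) := by
    have : ∀ x : ℝ, ∫ t in Set.Ioi x, g t = ∫ t : ℝ, (Set.Ioi x).indicator g t := by
      intro x; rw [integral_indicator measurableSet_Ioi]
    simp_rw [this]
    apply tendsto_integral_filter_of_dominated_convergence g
    · exact Eventually.of_forall fun x =>
        (g_cont.aestronglyMeasurable).indicator measurableSet_Ioi
    · exact Eventually.of_forall fun x => Eventually.of_forall fun t =>
        le_trans (norm_indicator_le_norm_self g t)
          (le_of_eq (Real.norm_of_nonneg (Real.exp_pos _).le))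
    · exact g_int
    · refine Eventually.of_forall fun t => ?_
      apply tendsto_const_nhds.congr'
      filter_upwards [eventually_lt_atBot t] with x hx
      simp [Set.indicator_of_mem, Set.mem_Ioi, hx]
  have h2 := key.const_mul (Real.sqrt (2 * Real.pi))⁻¹
  rw [g_total] at h2
  have hne : Real.sqrt (2 * Real.pi) ≠ 0 := by
    have : (0:ℝ) < 2 * Real.pi := by positivity
    positivity
  have : (Real.sqrt (2 * Real.pi))⁻¹ * Real.sqrt (2 * Real.pi) = 1 :=
    inv_mul_cancel₀ hne
  rw [this] at h2
  exact h2.congr fun x => (Q_def x).symm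

lemma phi_tendsto (ε : ℝ) : Tendsto (phi ε) atTop (nhds 1) := by
  have hu : Tendsto (fun a : ℝ => ε / a - a / 2) atTop atBot := by
    apply Filter.Tendsto.add_atBot (tendsto_const_nhds.div_atTop tendsto_id)
    exact tendsto_neg_atBot_iff.mpr (tendsto_id.atTop_div_const (by norm_num))
  have hv : Tendsto (fun a : ℝ => ε / a + a / 2) atTop atTop := by
    apply Filter.Tendsto.add_atTop (tendsto_const_nhds.div_atTop tendsto_id)
    exact tendsto_id.atTop_div_const (by norm_num)
  have h1 := Q_tendsto_atBot.comp hu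
  have h2 := (Q_tendsto_atTop.comp hv).const_mul (Real.exp ε)
  have := h1.sub h2
  have hphi : phi ε = fun z : ℝ => Q (ε / z - z / 2) - Real.exp ε * Q (ε / z + z / 2) := rfl
  rw [hphi]
  simpa [phi, Function.comp] using this

lemma phi_le (ε a : ℝ) (hε : 0 ≤ ε) (ha : 0 < a) :
    phi ε a ≤ (Real.sqrt (2 * Real.pi))⁻¹ * a := by
  set u := ε / a - a / 2 with hu
  set v := ε / a + a / 2 with hv
  have huv : u ≤ v := by
    rw [hu, hv]; nlinarith
  have hsplit : ∫ t in Set.Ioi u, g t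
      = (∫ t in Set.Ioc u v, g t) + ∫ t in Set.Ioi v, g t := by
    rw [← setIntegral_union (Set.Ioc_disjoint_Ioi le_rfl) measurableSet_Ioi
      g_int.integrableOn g_int.integrableOn, Set.Ioc_union_Ioi_eq_Ioi huv]
  have h1 : Q u - Q v = (Real.sqrt (2 * Real.pi))⁻¹ * ∫ t in Set.Ioc u v, g t := by
    rw [Q_def, Q_def, ← mul_sub]; congr 1
    rw [hsplit]; ring
  have h2 : ∫ t in Set.Ioc u v, g t ≤ a := by
    have hle : ∫ t in Set.Ioc u v, g t ≤ ∫ _t in Set.Ioc u v, (1:ℝ) := by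
      apply setIntegral_mono_on g_int.integrableOn (integrableOn_const (by
        rw [Real.volume_Ioc]; exact ENNReal.ofReal_ne_top)) measurableSet_Ioc
      intro t _
      exact Real.exp_le_one_iff.2 (by nlinarith [sq_nonneg t])
    have hconst : ∫ _t in Set.Ioc u v, (1:ℝ) = v - u := by
      simp [Real.volume_Ioc, ENNReal.toReal_ofReal (sub_nonneg.2 huv), huv]
    have hvu : v - u = a := by rw [hu, hv]; ring
    rw [hconst, hvu] at hle
    exact hle
  have h3 : Q v ≤ Real.exp ε * Q v :=
    le_mul_of_one_le_left (Q_nonneg v) (Real.one_le_exp hε)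
  have : phi ε a ≤ Q u - Q v := by
    unfold phi; rw [← hu, ← hv]; linarith
  rw [h1] at this
  calc phi ε a ≤ (Real.sqrt (2 * Real.pi))⁻¹ * ∫ t in Set.Ioc u v, g t := this
    _ ≤ (Real.sqrt (2 * Real.pi))⁻¹ * a := by
        exact mul_le_mul_of_nonneg_left h2 c_pos.le

end PhiAux

open PhiAux in
/-- For every `ε ≥ 0` and `δ ∈ (0,1)`, there is a unique `μ₀ > 0` with `φ_ε(μ₀) = δ`;
moreover `φ_ε(μ) ≤ δ` for `μ ∈ (0, μ₀]` and `φ_ε(μ) > δ` for `μ > μ₀`. -/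
theorem exists_unique_root_phi (ε δ : ℝ) (hε : 0 ≤ ε) (hδ : δ ∈ Set.Ioo (0 : ℝ) 1) :
    ∃ μ₀ : ℝ, 0 < μ₀ ∧ phi ε μ₀ = δ ∧
      (∀ μ : ℝ, 0 < μ → phi ε μ = δ → μ = μ₀) ∧
      (∀ μ : ℝ, 0 < μ → μ ≤ μ₀ → phi ε μ ≤ δ) ∧
      (∀ μ : ℝ, μ₀ < μ → δ < phi ε μ) := by
  obtain ⟨hδ0, hδ1⟩ := hδ
  set c : ℝ := (Real.sqrt (2 * Real.pi))⁻¹ with hc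
  have hcpos : 0 < c := c_pos
  set a₁ : ℝ := δ / (2 * c) with ha₁
  have ha₁pos : 0 < a₁ := by positivity
  have hphi1 : phi ε a₁ < δ := by
    have := phi_le ε a₁ hε ha₁pos
    have hca : c * a₁ = δ / 2 := by
      rw [ha₁]; field_simp
    rw [← hc] at this
    linarith
  have hev : ∀ᶠ a in atTop, δ < phi ε a :=
    (phi_tendsto ε).eventually (eventually_gt_nhds hδ1)
  obtain ⟨a₂, hphi2, ha₂⟩ := (hev.and (eventually_ge_atTop (a₁ + 1))).exists
  have ha₁a₂ : a₁ ≤ a₂ := by linarith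
  have hcont : ContinuousOn (phi ε) (Set.Icc a₁ a₂) := fun a ha =>
    (phi_hasDeriv ε a (lt_of_lt_of_le ha₁pos ha.1)).continuousAt.continuousWithinAt
  obtain ⟨μ₀, hμ₀mem, hμ₀⟩ := intermediate_value_Icc ha₁a₂ hcont ⟨hphi1.le, hphi2.le⟩
  have hμ₀pos : 0 < μ₀ := lt_of_lt_of_le ha₁pos hμ₀mem.1
  have hsm := phi_strictMono ε
  refine ⟨μ₀, hμ₀pos, hμ₀, ?_, ?_, ?_⟩
  · intro μ hμ hμδ
    exact hsm.injOn hμ hμ₀pos (by rw [hμδ, hμ₀])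
  · intro μ hμ hle
    rcases hle.lt_or_eq with h | h
    · exact le_of_lt (hμ₀ ▸ hsm hμ hμ₀pos h)
    · rw [h, hμ₀]
  · intro μ hμ
    have := hsm hμ₀pos (lt_trans hμ₀pos hμ) hμ
    rw [hμ₀] at this
    exact this
end

section
/- (i.n.i.d. Gaussian mechanism guarantee) Let K be a positive integer, ε ≥ 0, δ ∈ [0,1], λ_1,…,λ_K ≥ 0 and σ_1,…,σ_K > 0, and set μ = √(Σ_{i=1}^K λ_i²/σ_i²); assume μ > 0 and that Q(ε/μ − μ/2) − e^ε · Q(ε/μ + μ/2) ≤ δ. Let T be a random vector in ℝ^K whose coordinates are independent with T_i distributed as N(0, σ_i²). Then for all z, ž ∈ ℝ^K satisfying |z_i − ž_i| ≤ λ_i for every i, and every Borel set E ⊆ ℝ^K, it holds that P(z + T ∈ E) ≤ e^ε · P(ž + T ∈ E) + δ. -/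
open MeasureTheory ProbabilityTheory Real
open scoped ENNReal NNReal

namespace InidDP

lemma integrable_exp_neg_sq_div_two : Integrable (fun t : ℝ => rexp (-t ^ 2 / 2)) := by
  have h : (fun t : ℝ => rexp (-t ^ 2 / 2)) = fun t => rexp (-(1/2 : ℝ) * t ^ 2) := by
    funext t; ring_nf
  rw [h]
  exact integrable_exp_neg_mul_sq (by norm_num)

lemma Q_nonneg (x : ℝ) : 0 ≤ Q x := by
  unfold Q
  refine mul_nonneg (by positivity) ?_
  exact setIntegral_nonneg measurableSet_Ioi fun t _ => (Real.exp_pos _).le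

lemma hasDerivAt_Q (x : ℝ) :
    HasDerivAt Q (-((Real.sqrt (2 * π))⁻¹ * rexp (-x ^ 2 / 2))) x := by
  have hg : Continuous (fun t : ℝ => rexp (-t ^ 2 / 2)) := by fun_prop
  have hint := integrable_exp_neg_sq_div_two
  have hQ : Q = fun y => (Real.sqrt (2 * π))⁻¹ *
      (((∫ t, rexp (-t ^ 2 / 2)) - ∫ t in Set.Iic (0:ℝ), rexp (-t ^ 2 / 2))
        - ∫ t in (0:ℝ)..y, rexp (-t ^ 2 / 2)) := by
    funext y
    unfold Q
    congr 1
    have h1 : (∫ t in Set.Iic y, rexp (-t ^ 2 / 2)) - ∫ t in Set.Iic (0:ℝ), rexp (-t ^ 2 / 2)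
        = ∫ t in (0:ℝ)..y, rexp (-t ^ 2 / 2) :=
      intervalIntegral.integral_Iic_sub_Iic hint.integrableOn hint.integrableOn
    have h2 : (∫ t in Set.Iic y, rexp (-t ^ 2 / 2)) + ∫ t in Set.Ioi y, rexp (-t ^ 2 / 2)
        = ∫ t, rexp (-t ^ 2 / 2) := by
      have := integral_add_compl (measurableSet_Iic (a := y)) hint
      simpa [Set.compl_Iic] using this
    linarith
  rw [hQ]
  have hd : HasDerivAt (fun y => ∫ t in (0:ℝ)..y, rexp (-t ^ 2 / 2)) (rexp (-x ^ 2 / 2)) x :=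
    intervalIntegral.integral_hasDerivAt_right hint.intervalIntegrable
      (hg.stronglyMeasurable.stronglyMeasurableAtFilter) hg.continuousAt
  have := ((hasDerivAt_const x (((∫ t, rexp (-t ^ 2 / 2)) -
      ∫ t in Set.Iic (0:ℝ), rexp (-t ^ 2 / 2)))).sub hd).const_mul (Real.sqrt (2 * π))⁻¹
  simpa using this


lemma tradeoff_hasDerivAt {ε : ℝ} {m : ℝ} (hm : 0 < m) :
    HasDerivAt (fun m => Q (ε / m - m / 2) - rexp ε * Q (ε / m + m / 2))
      ((Real.sqrt (2 * π))⁻¹ * rexp (-(ε / m - m / 2) ^ 2 / 2)) m := by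
  have hm' : m ≠ 0 := hm.ne'
  have ha : HasDerivAt (fun m : ℝ => ε / m - m / 2) (ε * (-(m ^ 2)⁻¹) - 1/2) m := by
    have h1 : HasDerivAt (fun m : ℝ => ε / m) (ε * (-(m ^ 2)⁻¹)) m := by
      simpa [div_eq_mul_inv] using (hasDerivAt_inv hm').const_mul ε
    exact h1.sub ((hasDerivAt_id m).div_const 2)
  have hb : HasDerivAt (fun m : ℝ => ε / m + m / 2) (ε * (-(m ^ 2)⁻¹) + 1/2) m := by
    have h1 : HasDerivAt (fun m : ℝ => ε / m) (ε * (-(m ^ 2)⁻¹)) m := by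
      simpa [div_eq_mul_inv] using (hasDerivAt_inv hm').const_mul ε
    exact h1.add ((hasDerivAt_id m).div_const 2)
  have hQa := (hasDerivAt_Q (ε / m - m / 2)).comp m ha
  have hQb := ((hasDerivAt_Q (ε / m + m / 2)).comp m hb).const_mul (rexp ε)
  have key : rexp ε * rexp (-(ε / m + m / 2) ^ 2 / 2) = rexp (-(ε / m - m / 2) ^ 2 / 2) := by
    rw [← Real.exp_add]
    congr 1
    field_simp
    ring
  have h := hQa.sub hQb
  refine h.congr_deriv ?_
  have : rexp ε * (-((Real.sqrt (2 * π))⁻¹ * rexp (-(ε / m + m / 2) ^ 2 / 2)) *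
      (ε * (-(m ^ 2)⁻¹) + 1/2))
      = -((Real.sqrt (2 * π))⁻¹ * rexp (-(ε / m - m / 2) ^ 2 / 2)) * (ε * (-(m ^ 2)⁻¹) + 1/2) := by
    rw [← key]; ring
  rw [this]
  ring

lemma tradeoff_mono (ε : ℝ) :
    MonotoneOn (fun m => Q (ε / m - m / 2) - rexp ε * Q (ε / m + m / 2)) (Set.Ioi (0:ℝ)) := by
  have hint : interior (Set.Ioi (0:ℝ)) = Set.Ioi 0 := isOpen_Ioi.interior_eq
  refine monotoneOn_of_deriv_nonneg (convex_Ioi 0) ?_ ?_ ?_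
  · exact fun m hm => (tradeoff_hasDerivAt hm).continuousAt.continuousWithinAt
  · rw [hint]
    exact fun m hm => (tradeoff_hasDerivAt hm).differentiableAt.differentiableWithinAt
  · rw [hint]
    intro m hm
    rw [(tradeoff_hasDerivAt hm).deriv]
    positivity
lemma pi_map_coord {n : ℕ} (μ : Fin n → Measure ℝ) [∀ i, IsProbabilityMeasure (μ i)]
    (g : Fin n → ℝ → ℝ) (hg : ∀ i, Measurable (g i)) :
    (Measure.pi μ).map (fun t i => g i (t i)) = Measure.pi (fun i => (μ i).map (g i)) := by
  haveI : ∀ i, IsProbabilityMeasure ((μ i).map (g i)) :=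
    fun i => Measure.isProbabilityMeasure_map (hg i).aemeasurable
  have hmeas : Measurable (fun t : Fin n → ℝ => fun i => g i (t i)) :=
    measurable_pi_lambda _ fun i => (hg i).comp (measurable_pi_apply i)
  refine (Measure.pi_eq (μ := fun i => (μ i).map (g i)) fun s hs => ?_).symm
  rw [Measure.map_apply hmeas (MeasurableSet.univ_pi hs)]
  have hpre : (fun t : Fin n → ℝ => fun i => g i (t i)) ⁻¹' Set.pi Set.univ s
      = Set.pi Set.univ (fun i => g i ⁻¹' s i) := by
    ext t; simp [Set.mem_pi]
  rw [hpre, Measure.pi_pi]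
  exact Finset.prod_congr rfl fun i _ => (Measure.map_apply (hg i) (hs i)).symm

lemma lintegral_pi_prod : ∀ {n : ℕ} (μ : Fin n → Measure ℝ),
    (∀ i, IsProbabilityMeasure (μ i)) → ∀ (f : Fin n → ℝ → ℝ≥0∞), (∀ i, Measurable (f i)) →
    ∫⁻ t, ∏ i, f i (t i) ∂(Measure.pi μ) = ∏ i, ∫⁻ x, f i x ∂(μ i)
  | 0, μ, hμ, f, hf => by
    haveI := hμ
    simp [lintegral_const]
  | (n+1), μ, hμ, f, hf => by
    haveI := hμ
    have hmp := measurePreserving_piFinSuccAbove μ 0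
    set e := MeasurableEquiv.piFinSuccAbove (fun _ : Fin (n+1) => ℝ) 0 with he
    have hprodmeas : Measurable (fun y : Fin n → ℝ => ∏ j, f (Fin.succ j) (y j)) :=
      Finset.measurable_prod Finset.univ fun (j : Fin n) _ =>
        (hf (Fin.succ j)).comp (measurable_pi_apply j)
    have hG : Measurable (fun p : ℝ × (Fin n → ℝ) => f 0 p.1 * ∏ j, f (Fin.succ j) (p.2 j)) :=
      ((hf 0).comp measurable_fst).mul (hprodmeas.comp measurable_snd)
    have h1 : ∫⁻ t, ∏ i, f i (t i) ∂(Measure.pi μ)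
        = ∫⁻ p, f 0 p.1 * ∏ j, f (Fin.succ j) (p.2 j)
            ∂((μ 0).prod (Measure.pi fun j => μ (Fin.succAbove 0 j))) := by
      rw [← hmp.map_eq, lintegral_map hG e.measurable]
      congr 1
      funext t
      simp [e, Fin.prod_univ_succ, Fin.zero_succAbove, Fin.tail]
    rw [h1, lintegral_prod _ hG.aemeasurable]
    have h2 : ∀ x : ℝ, ∫⁻ y, f 0 x * ∏ j, f (Fin.succ j) (y j)
          ∂(Measure.pi fun j => μ (Fin.succAbove 0 j))
        = f 0 x * ∏ j, ∫⁻ u, f (Fin.succ j) u ∂(μ (Fin.succ j)) := by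
      intro x
      rw [lintegral_const_mul _ hprodmeas]
      congr 1
      have harg : (fun j : Fin n => μ (Fin.succAbove 0 j)) = fun j => μ (Fin.succ j) := by
        funext j; rw [Fin.zero_succAbove]
      rw [harg]
      exact lintegral_pi_prod (fun j => μ (Fin.succ j)) (fun j => hμ (Fin.succ j))
        (fun j => f (Fin.succ j)) (fun j => hf (Fin.succ j))
    rw [lintegral_congr h2, lintegral_mul_const _ (hf 0), Fin.prod_univ_succ]

lemma pi_withDensity {n : ℕ} (μ : Fin n → Measure ℝ) [∀ i, IsProbabilityMeasure (μ i)]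
    (f : Fin n → ℝ → ℝ≥0∞) (hf : ∀ i, Measurable (f i))
    (hp : ∀ i, IsProbabilityMeasure ((μ i).withDensity (f i))) :
    Measure.pi (fun i => (μ i).withDensity (f i))
      = (Measure.pi μ).withDensity (fun t => ∏ i, f i (t i)) := by
  haveI := hp
  refine Measure.pi_eq (μ := fun i => (μ i).withDensity (f i)) fun s hs => ?_
  rw [withDensity_apply _ (MeasurableSet.univ_pi hs)]
  have h1 : ∫⁻ t in Set.pi Set.univ s, ∏ i, f i (t i) ∂(Measure.pi μ)
      = ∫⁻ t, ∏ i, (fun x => f i x * (s i).indicator 1 x) (t i) ∂(Measure.pi μ) := by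
    rw [← lintegral_indicator (MeasurableSet.univ_pi hs)]
    congr 1
    funext t
    by_cases ht : t ∈ Set.pi Set.univ s
    · rw [Set.indicator_of_mem ht]
      refine Finset.prod_congr rfl fun i _ => ?_
      have hti : t i ∈ s i := ht i (Set.mem_univ i)
      simp [Set.indicator_of_mem hti]
    · rw [Set.indicator_of_notMem ht]
      have hex : ∃ i, t i ∉ s i := by simpa [Set.mem_pi] using ht
      obtain ⟨i, hi⟩ := hex
      refine (Finset.prod_eq_zero (Finset.mem_univ i) ?_).symm
      simp [Set.indicator_of_notMem hi]
  rw [h1, lintegral_pi_prod μ (fun i => inferInstance) (fun i x => f i x * (s i).indicator 1 x)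
    (fun i => (hf i).mul (measurable_one.indicator (hs i)))]
  refine Finset.prod_congr rfl fun i _ => ?_
  rw [withDensity_apply _ (hs i), ← lintegral_indicator (hs i)]
  congr 1
  funext x
  by_cases hx : x ∈ s i <;> simp [hx]
lemma gaussian_tilt (m m' : ℝ) {v : ℝ≥0} (hv : v ≠ 0) :
    (gaussianReal m' v).withDensity
      (fun x => ENNReal.ofReal (rexp (((x - m') ^ 2 - (x - m) ^ 2) / (2 * v))))
      = gaussianReal m v := by
  rw [gaussianReal_of_var_ne_zero _ hv, gaussianReal_of_var_ne_zero m hv,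
    ← withDensity_mul _ (measurable_gaussianPDF _ _)
      (by fun_prop : Measurable (fun x : ℝ =>
        ENNReal.ofReal (rexp (((x - m') ^ 2 - (x - m) ^ 2) / (2 * v)))))]
  congr 1
  funext x
  simp only [Pi.mul_apply, gaussianPDF]
  rw [← ENNReal.ofReal_mul (gaussianPDFReal_nonneg _ _ _)]
  congr 1
  unfold gaussianPDFReal
  rw [mul_assoc, ← Real.exp_add]
  congr 1
  field_simp
  ring
lemma gaussianReal_Ioi (m : ℝ) {v : ℝ≥0} (hv : v ≠ 0) (θ : ℝ) :
    gaussianReal m v (Set.Ioi θ) = ENNReal.ofReal (Q ((θ - m) / Real.sqrt v)) := by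
  have hvpos : (0:ℝ) < (v:ℝ) := lt_of_le_of_ne (v.coe_nonneg) (by exact_mod_cast hv.symm)
  have hs : (0:ℝ) < Real.sqrt v := Real.sqrt_pos.mpr hvpos
  have hv1 : (NNReal.mk ((Real.sqrt v)^2) (sq_nonneg _)) * 1 = v := by
    ext
    push_cast
    rw [mul_one]
    exact Real.sq_sqrt v.coe_nonneg
  have hmap : gaussianReal m v
      = ((gaussianReal 0 1).map (fun u => Real.sqrt v * u)).map (· + m) := by
    rw [gaussianReal_map_const_mul (Real.sqrt v), hv1, gaussianReal_map_add_const m]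
    norm_num
  rw [hmap, Measure.map_apply (measurable_add_const m) measurableSet_Ioi]
  have hp1 : (· + m) ⁻¹' Set.Ioi θ = Set.Ioi (θ - m) := by
    ext x; simp [Set.mem_Ioi, lt_sub_iff_add_lt, sub_lt_iff_lt_add]
  rw [hp1, Measure.map_apply (measurable_const_mul _) measurableSet_Ioi]
  have hp2 : (fun u => Real.sqrt v * u) ⁻¹' Set.Ioi (θ - m) = Set.Ioi ((θ - m) / Real.sqrt v) := by
    ext x
    simp only [Set.mem_preimage, Set.mem_Ioi]
    rw [div_lt_iff₀ hs, mul_comm]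
  rw [hp2, gaussianReal_apply_eq_integral 0 one_ne_zero]
  congr 1
  unfold Q gaussianPDFReal
  rw [← MeasureTheory.integral_const_mul]
  apply setIntegral_congr_fun measurableSet_Ioi
  intro x _
  norm_num
lemma gaussianPDFReal_conv (m₁ m₂ : ℝ) {v₁ v₂ : ℝ≥0} (h₁ : v₁ ≠ 0) (h₂ : v₂ ≠ 0) (y : ℝ) :
    ∫ x, gaussianPDFReal m₁ v₁ x * gaussianPDFReal m₂ v₂ (y - x)
      = gaussianPDFReal (m₁ + m₂) (v₁ + v₂) y := by
  have hV₁ : (0:ℝ) < (v₁:ℝ) := lt_of_le_of_ne v₁.coe_nonneg (by exact_mod_cast h₁.symm)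
  have hV₂ : (0:ℝ) < (v₂:ℝ) := lt_of_le_of_ne v₂.coe_nonneg (by exact_mod_cast h₂.symm)
  set S : ℝ := (v₁:ℝ) + (v₂:ℝ) with hSdef
  have hS : (0:ℝ) < S := by positivity
  set b : ℝ := S / (2 * v₁ * v₂) with hbdef
  have hb : (0:ℝ) < b := by positivity
  set c : ℝ := m₁ + (v₁:ℝ) * (y - m₁ - m₂) / S with hcdef
  have hπb : (0:ℝ) < π / b := by positivity
  have key : ∀ x, gaussianPDFReal m₁ v₁ x * gaussianPDFReal m₂ v₂ (y - x)
      = gaussianPDFReal (m₁ + m₂) (v₁ + v₂) y *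
        ((Real.sqrt (π / b))⁻¹ * rexp (-b * (x - c) ^ 2)) := by
    intro x
    unfold gaussianPDFReal
    have hconst : (Real.sqrt (2 * π * v₁))⁻¹ * (Real.sqrt (2 * π * v₂))⁻¹
        = (Real.sqrt (2 * π * ((v₁:ℝ) + (v₂:ℝ))))⁻¹ * (Real.sqrt (π / b))⁻¹ := by
      rw [← mul_inv, ← mul_inv, ← Real.sqrt_mul (by positivity), ← Real.sqrt_mul (by positivity)]
      congr 1
      rw [hbdef, hSdef]
      field_simp
    have hexp : rexp (-(x - m₁) ^ 2 / (2 * v₁)) * rexp (-(y - x - m₂) ^ 2 / (2 * v₂))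
        = rexp (-(y - (m₁ + m₂)) ^ 2 / (2 * ((v₁:ℝ) + (v₂:ℝ)))) * rexp (-b * (x - c) ^ 2) := by
      rw [← Real.exp_add, ← Real.exp_add]
      congr 1
      rw [hcdef, hbdef, hSdef]
      field_simp
      ring
    have hcast : ((v₁ + v₂ : ℝ≥0) : ℝ) = (v₁:ℝ) + (v₂:ℝ) := by push_cast; ring
    calc (Real.sqrt (2 * π * v₁))⁻¹ * rexp (-(x - m₁) ^ 2 / (2 * v₁)) *
          ((Real.sqrt (2 * π * v₂))⁻¹ * rexp (-(y - x - m₂) ^ 2 / (2 * v₂)))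
        = ((Real.sqrt (2 * π * v₁))⁻¹ * (Real.sqrt (2 * π * v₂))⁻¹) *
          (rexp (-(x - m₁) ^ 2 / (2 * v₁)) * rexp (-(y - x - m₂) ^ 2 / (2 * v₂))) := by ring
      _ = ((Real.sqrt (2 * π * ((v₁:ℝ) + (v₂:ℝ))))⁻¹ * (Real.sqrt (π / b))⁻¹) *
          (rexp (-(y - (m₁ + m₂)) ^ 2 / (2 * ((v₁:ℝ) + (v₂:ℝ)))) * rexp (-b * (x - c) ^ 2)) := by
          rw [hconst, hexp]
      _ = (Real.sqrt (2 * π * ((v₁ + v₂ : ℝ≥0) : ℝ)))⁻¹ *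
            rexp (-(y - (m₁ + m₂)) ^ 2 / (2 * ((v₁ + v₂ : ℝ≥0) : ℝ))) *
          ((Real.sqrt (π / b))⁻¹ * rexp (-b * (x - c) ^ 2)) := by rw [hcast]; ring
  simp_rw [key]
  rw [integral_const_mul, integral_const_mul]
  have hgauss : ∫ x, rexp (-b * (x - c) ^ 2) = Real.sqrt (π / b) := by
    rw [integral_sub_right_eq_self (fun x => rexp (-b * x ^ 2)) c]
    exact integral_gaussian b
  rw [hgauss, inv_mul_cancel₀ (ne_of_gt (Real.sqrt_pos.mpr hπb)), mul_one]
lemma gaussianPDFReal_le (m : ℝ) (v : ℝ≥0) (x : ℝ) :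
    gaussianPDFReal m v x ≤ (Real.sqrt (2 * π * v))⁻¹ := by
  unfold gaussianPDFReal
  refine mul_le_of_le_one_right (by positivity) ?_
  rw [Real.exp_le_one_iff]
  apply div_nonpos_of_nonpos_of_nonneg
  · simp [sq_nonneg]
  · positivity

lemma gaussian_conv (m₁ m₂ : ℝ) (v₁ v₂ : ℝ≥0) :
    ((gaussianReal m₁ v₁).prod (gaussianReal m₂ v₂)).map (fun p => p.1 + p.2)
      = gaussianReal (m₁ + m₂) (v₁ + v₂) := by
  by_cases h₁ : v₁ = 0
  · subst h₁
    rw [gaussianReal_zero_var, Measure.dirac_prod, Measure.map_map measurable_add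
      (measurable_prodMk_left)]
    have : (fun p : ℝ × ℝ => p.1 + p.2) ∘ (Prod.mk m₁) = fun y => m₁ + y := rfl
    rw [this, gaussianReal_map_const_add, add_comm m₂ m₁, zero_add]
  by_cases h₂ : v₂ = 0
  · subst h₂
    rw [gaussianReal_zero_var, Measure.prod_dirac, Measure.map_map measurable_add
      (measurable_prodMk_right)]
    have : (fun p : ℝ × ℝ => p.1 + p.2) ∘ (fun x => (x, m₂)) = fun x => x + m₂ := rfl
    rw [this, gaussianReal_map_add_const, add_zero]
  have hsum : v₁ + v₂ ≠ 0 := fun h => h₁ (by simpa using (add_eq_zero.mp h).1)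
  ext s hs
  rw [Measure.map_apply measurable_add hs, Measure.prod_apply (measurable_add hs)]
  have hinner : ∀ x : ℝ, gaussianReal m₂ v₂ (Prod.mk x ⁻¹' ((fun p : ℝ × ℝ => p.1 + p.2) ⁻¹' s))
      = ∫⁻ y in s, ENNReal.ofReal (gaussianPDFReal m₂ v₂ (y - x)) := by
    intro x
    have hset : Prod.mk x ⁻¹' ((fun p : ℝ × ℝ => p.1 + p.2) ⁻¹' s) = (fun y => x + y) ⁻¹' s := rfl
    rw [hset, ← Measure.map_apply (measurable_const_add x) hs, gaussianReal_map_const_add,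
      gaussianReal_apply _ h₂]
    refine setLIntegral_congr_fun hs (fun y _ => ?_)
    rw [gaussianPDF]
    congr 1
    rw [gaussianPDFReal_sub]
  calc ∫⁻ x, gaussianReal m₂ v₂ (Prod.mk x ⁻¹' ((fun p : ℝ × ℝ => p.1 + p.2) ⁻¹' s))
        ∂(gaussianReal m₁ v₁)
      = ∫⁻ x, ∫⁻ y in s, ENNReal.ofReal (gaussianPDFReal m₂ v₂ (y - x)) ∂volume
          ∂(gaussianReal m₁ v₁) := by
        exact lintegral_congr hinner
    _ = ∫⁻ x, ENNReal.ofReal (gaussianPDFReal m₁ v₁ x) *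
          ∫⁻ y in s, ENNReal.ofReal (gaussianPDFReal m₂ v₂ (y - x)) ∂volume ∂volume := by
        rw [gaussianReal_of_var_ne_zero _ h₁]
        rw [lintegral_withDensity_eq_lintegral_mul _ (measurable_gaussianPDF _ _) ?_]
        · rfl
        · apply Measurable.lintegral_prod_right (f := fun (x y : ℝ) =>
            ENNReal.ofReal (gaussianPDFReal m₂ v₂ (y - x)))
          exact ((measurable_gaussianPDFReal m₂ v₂).comp
            (measurable_snd.sub measurable_fst)).ennreal_ofReal
    _ = ∫⁻ x, ∫⁻ y in s, ENNReal.ofReal (gaussianPDFReal m₁ v₁ x) *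
          ENNReal.ofReal (gaussianPDFReal m₂ v₂ (y - x)) ∂volume ∂volume := by
        refine lintegral_congr fun x => ?_
        have hm : Measurable fun y : ℝ => ENNReal.ofReal (gaussianPDFReal m₂ v₂ (y - x)) :=
          ((measurable_gaussianPDFReal m₂ v₂).comp (measurable_id.sub_const x)).ennreal_ofReal
        exact (lintegral_const_mul _ hm).symm
    _ = ∫⁻ y in s, ∫⁻ x, ENNReal.ofReal (gaussianPDFReal m₁ v₁ x) *
          ENNReal.ofReal (gaussianPDFReal m₂ v₂ (y - x)) ∂volume ∂volume := by
        refine lintegral_lintegral_swap ?_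
        exact (((measurable_gaussianPDFReal m₁ v₁).comp
          measurable_fst).ennreal_ofReal.mul (((measurable_gaussianPDFReal m₂ v₂).comp
          (measurable_snd.sub measurable_fst)).ennreal_ofReal)).aemeasurable
    _ = ∫⁻ y in s, ENNReal.ofReal (gaussianPDFReal (m₁ + m₂) (v₁ + v₂) y) ∂volume := by
        refine setLIntegral_congr_fun hs (fun y _ => ?_)
        have hmul : ∀ x : ℝ, ENNReal.ofReal (gaussianPDFReal m₁ v₁ x) *
            ENNReal.ofReal (gaussianPDFReal m₂ v₂ (y - x))
            = ENNReal.ofReal (gaussianPDFReal m₁ v₁ x * gaussianPDFReal m₂ v₂ (y - x)) :=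
          fun x => (ENNReal.ofReal_mul (gaussianPDFReal_nonneg _ _ _)).symm
        simp_rw [hmul]
        have hintg : Integrable (fun x => gaussianPDFReal m₁ v₁ x *
            gaussianPDFReal m₂ v₂ (y - x)) := by
          have hmeas2 : AEStronglyMeasurable (fun x : ℝ => gaussianPDFReal m₂ v₂ (y - x))
              volume :=
            ((measurable_gaussianPDFReal m₂ v₂).comp
              (measurable_const.sub measurable_id)).aestronglyMeasurable
          have := Integrable.bdd_mul (f := fun x : ℝ => gaussianPDFReal m₂ v₂ (y - x))
            (integrable_gaussianPDFReal m₁ v₁) hmeas2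
            (c := (Real.sqrt (2 * π * v₂))⁻¹) (ae_of_all _ fun x => by
              rw [Real.norm_eq_abs, abs_of_nonneg (gaussianPDFReal_nonneg _ _ _)]
              exact gaussianPDFReal_le _ _ _)
          simpa [mul_comm] using this
        rw [← ofReal_integral_eq_lintegral_ofReal hintg
          (ae_of_all _ fun x => mul_nonneg (gaussianPDFReal_nonneg _ _ _)
            (gaussianPDFReal_nonneg _ _ _))]
        rw [gaussianPDFReal_conv m₁ m₂ h₁ h₂ y]
    _ = gaussianReal (m₁ + m₂) (v₁ + v₂) s := by
        rw [gaussianReal_apply _ hsum]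
        rfl
lemma pi_gaussian_sum : ∀ {n : ℕ} (m : Fin n → ℝ) (v : Fin n → ℝ≥0),
    (Measure.pi (fun i => gaussianReal (m i) (v i))).map (fun t => ∑ i, t i)
      = gaussianReal (∑ i, m i) (∑ i, v i)
  | 0, m, v => by
    have h0 : (fun t : Fin 0 → ℝ => ∑ i, t i) = fun _ => (0:ℝ) := by
      funext t; simp
    rw [h0, Measure.map_const, measure_univ, one_smul]
    simp [gaussianReal_zero_var]
  | (n+1), m, v => by
    have hmp := measurePreserving_piFinSuccAbove (fun i => gaussianReal (m i) (v i)) 0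
    set e := MeasurableEquiv.piFinSuccAbove (fun _ : Fin (n+1) => ℝ) 0 with he
    have hsum : Measurable (fun y : Fin n → ℝ => ∑ j, y j) :=
      Finset.measurable_sum Finset.univ fun j _ => measurable_pi_apply j
    have h1 : (fun t : Fin (n+1) → ℝ => ∑ i, t i)
        = (fun p : ℝ × (Fin n → ℝ) => p.1 + ∑ j, p.2 j) ∘ e := by
      funext t
      simp [e, Fin.sum_univ_succ, Fin.tail]
    have h2 : Measurable (fun p : ℝ × (Fin n → ℝ) => p.1 + ∑ j, p.2 j) :=
      measurable_fst.add (hsum.comp measurable_snd)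
    rw [h1, ← Measure.map_map h2 e.measurable, hmp.map_eq]
    have h3 : (fun p : ℝ × (Fin n → ℝ) => p.1 + ∑ j, p.2 j)
        = (fun q : ℝ × ℝ => q.1 + q.2) ∘ (Prod.map id (fun y : Fin n → ℝ => ∑ j, y j)) := rfl
    rw [h3, ← Measure.map_map measurable_add (Measurable.prodMap measurable_id hsum),
      ← Measure.map_prod_map _ _ measurable_id hsum, Measure.map_id]
    have h4 : (fun j : Fin n => gaussianReal (m (Fin.succAbove 0 j)) (v (Fin.succAbove 0 j)))
        = fun j => gaussianReal (m (Fin.succ j)) (v (Fin.succ j)) := by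
      funext j; rw [Fin.zero_succAbove]
    rw [h4, pi_gaussian_sum (fun j => m (Fin.succ j)) (fun j => v (Fin.succ j)),
      gaussian_conv, ← Fin.sum_univ_succ, ← Fin.sum_univ_succ]

lemma pi_gaussian_dot {n : ℕ} (c m : Fin n → ℝ) (v : Fin n → ℝ≥0) :
    (Measure.pi (fun i => gaussianReal (m i) (v i))).map (fun t => ∑ i, c i * t i)
      = gaussianReal (∑ i, c i * m i)
        (∑ i, (⟨(c i)^2, sq_nonneg _⟩ * v i : ℝ≥0)) := by
  have hsum : Measurable (fun y : Fin n → ℝ => ∑ j, y j) :=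
    Finset.measurable_sum Finset.univ fun j _ => measurable_pi_apply j
  have hscale : Measurable (fun t : Fin n → ℝ => fun i => c i * t i) :=
    measurable_pi_lambda _ fun i => by fun_prop
  have h1 : (fun t : Fin n → ℝ => ∑ i, c i * t i)
      = (fun t : Fin n → ℝ => ∑ i, t i) ∘ (fun t i => c i * t i) := rfl
  rw [h1, ← Measure.map_map hsum hscale,
    pi_map_coord _ (fun i x => c i * x) (fun i => measurable_id.const_mul (c i))]
  simp_rw [gaussianReal_map_const_mul]
  exact pi_gaussian_sum _ _
end InidDP

open InidDP

/-- (ε,δ)-DP guarantee of the i.n.i.d. Gaussian mechanism: if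
`μ = √(Σ_i λ_i²/σ_i²) > 0` satisfies `Q(ε/μ − μ/2) − e^ε Q(ε/μ + μ/2) ≤ δ`, then adding
independent `N(0, σ_i²)` noise to each coordinate is (ε,δ)-differentially private for the
sensitivity profile `λ`. -/
theorem inid_gaussian_DP (K : ℕ) (hK : 0 < K) (ε δ : ℝ) (hε : 0 ≤ ε)
    (hδ : δ ∈ Set.Icc (0 : ℝ) 1) (lam σ : Fin K → ℝ) (hlam : ∀ i, 0 ≤ lam i)
    (hσ : ∀ i, 0 < σ i)
    (hμ : 0 < Real.sqrt (∑ i, lam i ^ 2 / σ i ^ 2))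
    (hpriv :
      Q (ε / Real.sqrt (∑ i, lam i ^ 2 / σ i ^ 2) - Real.sqrt (∑ i, lam i ^ 2 / σ i ^ 2) / 2) -
          Real.exp ε *
            Q (ε / Real.sqrt (∑ i, lam i ^ 2 / σ i ^ 2) +
                Real.sqrt (∑ i, lam i ^ 2 / σ i ^ 2) / 2) ≤ δ) :
    ∀ z zc : Fin K → ℝ, (∀ i, |z i - zc i| ≤ lam i) →
      ∀ E : Set (Fin K → ℝ), MeasurableSet E →
        (Measure.pi fun i => gaussianReal 0 (Real.toNNReal (σ i ^ 2))) {t | z + t ∈ E} ≤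
          ENNReal.ofReal (Real.exp ε) *
              (Measure.pi fun i => gaussianReal 0 (Real.toNNReal (σ i ^ 2))) {t | zc + t ∈ E} +
            ENNReal.ofReal δ := by
  intro z zc hzzc E hE
  set μbar := Real.sqrt (∑ i, lam i ^ 2 / σ i ^ 2) with hμbar
  have hvco : ∀ i, ((Real.toNNReal (σ i ^ 2) : ℝ≥0) : ℝ) = σ i ^ 2 :=
    fun i => Real.coe_toNNReal _ (sq_nonneg _)
  have hv : ∀ i, Real.toNNReal (σ i ^ 2) ≠ 0 := by
    intro i h0
    have := hvco i
    rw [h0] at this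
    simp only [NNReal.coe_zero] at this
    have hσi := hσ i
    nlinarith
  -- Step A: translation
  have hshift : ∀ (w : Fin K → ℝ) (F : Set (Fin K → ℝ)), MeasurableSet F →
      (Measure.pi fun i => gaussianReal 0 (Real.toNNReal (σ i ^ 2))) {t | w + t ∈ F}
        = (Measure.pi fun i => gaussianReal (w i) (Real.toNNReal (σ i ^ 2))) F := by
    intro w F hF
    have hmw : Measurable (fun t : Fin K → ℝ => fun i => w i + t i) :=
      measurable_pi_lambda _ fun i => by fun_prop
    have hpre : {t : Fin K → ℝ | w + t ∈ F} = (fun t : Fin K → ℝ => fun i => w i + t i) ⁻¹' F :=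
      rfl
    rw [hpre, ← Measure.map_apply hmw hF,
      pi_map_coord _ (fun i x => w i + x) (fun i => measurable_const_add (w i))]
    have hfam : (fun i => (gaussianReal 0 (Real.toNNReal (σ i ^ 2))).map (fun x => w i + x))
        = fun i => gaussianReal (w i) (Real.toNNReal (σ i ^ 2)) := by
      funext i
      rw [gaussianReal_map_const_add, zero_add]
    rw [hfam]
  rw [hshift z E hE, hshift zc E hE]
  set P := Measure.pi (fun i => gaussianReal (z i) (Real.toNNReal (σ i ^ 2))) with hPdef
  set P' := Measure.pi (fun i => gaussianReal (zc i) (Real.toNNReal (σ i ^ 2))) with hP'def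
  set eε := ENNReal.ofReal (Real.exp ε) with heε
  have h1eε : (1 : ℝ≥0∞) ≤ eε := by
    rw [heε, ENNReal.one_le_ofReal]
    exact Real.one_le_exp hε
  by_cases hzeq : z = zc
  · have hPP : P = P' := by rw [hPdef, hP'def, hzeq]
    rw [hPP]
    calc P' E ≤ eε * P' E := le_mul_of_one_le_left zero_le h1eε
      _ ≤ eε * P' E + ENNReal.ofReal δ := le_add_right le_rfl
  -- main case
  set ρ := Real.sqrt (∑ i, (z i - zc i) ^ 2 / σ i ^ 2) with hρ
  have hsum_pos : 0 < ∑ i, (z i - zc i) ^ 2 / σ i ^ 2 := by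
    obtain ⟨j, hj⟩ : ∃ j, z j ≠ zc j := by
      by_contra hcon; push_neg at hcon; exact hzeq (funext hcon)
    refine Finset.sum_pos' (fun i _ => by
      have hσi : σ i ≠ 0 := (hσ i).ne'
      positivity) ⟨j, Finset.mem_univ j, ?_⟩
    have hne : z j - zc j ≠ 0 := sub_ne_zero.mpr hj
    have hσj : σ j ≠ 0 := (hσ j).ne'
    positivity
  have hρpos : 0 < ρ := Real.sqrt_pos.mpr hsum_pos
  have hρsq : ρ ^ 2 = ∑ i, (z i - zc i) ^ 2 / σ i ^ 2 := Real.sq_sqrt hsum_pos.le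
  have hρμ : ρ ≤ μbar := by
    apply Real.sqrt_le_sqrt
    refine Finset.sum_le_sum fun i _ => ?_
    have hσ2 : (0:ℝ) < σ i ^ 2 := pow_pos (hσ i) 2
    have hsqle : (z i - zc i) ^ 2 ≤ lam i ^ 2 := by
      calc (z i - zc i) ^ 2 = |z i - zc i| ^ 2 := (sq_abs _).symm
        _ ≤ lam i ^ 2 := pow_le_pow_left₀ (abs_nonneg _) (hzzc i) 2
    gcongr
  set c : Fin K → ℝ := fun i => (z i - zc i) / σ i ^ 2 with hc
  set d : ℝ := ∑ i, ((zc i) ^ 2 - (z i) ^ 2) / (2 * σ i ^ 2) with hd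
  set ℓ : (Fin K → ℝ) → ℝ :=
    fun t => ∑ i, ((t i - zc i) ^ 2 - (t i - z i) ^ 2) / (2 * σ i ^ 2) with hℓ
  have hℓ_lin : ∀ t, ℓ t = (∑ i, c i * t i) + d := by
    intro t
    rw [hℓ, hd, ← Finset.sum_add_distrib]
    refine Finset.sum_congr rfl fun i _ => ?_
    have hσ2 : σ i ^ 2 ≠ 0 := pow_ne_zero 2 (hσ i).ne'
    rw [hc]
    field_simp
    ring
  have hℓ_meas : Measurable ℓ := by
    rw [hℓ]
    refine Finset.measurable_sum Finset.univ fun i _ => Measurable.div_const ?_ _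
    exact (((measurable_pi_apply i).sub_const _).pow_const 2).sub
      (((measurable_pi_apply i).sub_const _).pow_const 2)
  -- tilt
  have htilt : P = P'.withDensity (fun t => ENNReal.ofReal (Real.exp (ℓ t))) := by
    have hfi : ∀ i, Measurable (fun x : ℝ => ENNReal.ofReal (Real.exp
        (((x - zc i) ^ 2 - (x - z i) ^ 2) / (2 * ((Real.toNNReal (σ i ^ 2) : ℝ≥0) : ℝ))))) := by
      intro i
      exact ((((measurable_id.sub_const _).pow_const 2).sub
        ((measurable_id.sub_const _).pow_const 2)).div_const _).exp.ennreal_ofReal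
    have hco : ∀ i, (gaussianReal (zc i) (Real.toNNReal (σ i ^ 2))).withDensity
        (fun x => ENNReal.ofReal (Real.exp
          (((x - zc i) ^ 2 - (x - z i) ^ 2) / (2 * ((Real.toNNReal (σ i ^ 2) : ℝ≥0) : ℝ)))))
        = gaussianReal (z i) (Real.toNNReal (σ i ^ 2)) :=
      fun i => gaussian_tilt (z i) (zc i) (hv i)
    have hprob : ∀ i, IsProbabilityMeasure
        ((gaussianReal (zc i) (Real.toNNReal (σ i ^ 2))).withDensity
          (fun x => ENNReal.ofReal (Real.exp
            (((x - zc i) ^ 2 - (x - z i) ^ 2) / (2 * ((Real.toNNReal (σ i ^ 2) : ℝ≥0) : ℝ)))))) :=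
      fun i => by rw [hco i]; infer_instance
    have hpw := pi_withDensity (fun i => gaussianReal (zc i) (Real.toNNReal (σ i ^ 2)))
      _ hfi hprob
    simp_rw [hco] at hpw
    rw [hPdef, hpw, hP'def]
    congr 1
    funext t
    rw [← ENNReal.ofReal_prod_of_nonneg (fun i _ => (Real.exp_pos _).le), ← Real.exp_sum]
    congr 2
    rw [hℓ]
    exact Finset.sum_congr rfl fun i _ => by rw [hvco i]
  set A : Set (Fin K → ℝ) := {t | ε < ℓ t} with hA
  have hAmeas : MeasurableSet A := measurableSet_lt measurable_const hℓ_meas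
  -- core inequality
  have hPE : P E ≤ eε * P' E + (P A - eε * P' A) := by
    have hgmeas : Measurable (fun t => ENNReal.ofReal (Real.exp (ℓ t)) - eε) :=
      (hℓ_meas.exp.ennreal_ofReal).sub measurable_const
    have step1 : P E = ∫⁻ t in E, ENNReal.ofReal (Real.exp (ℓ t)) ∂P' := by
      rw [htilt, withDensity_apply _ hE]
    have step2 : ∫⁻ t in E, ENNReal.ofReal (Real.exp (ℓ t)) ∂P'
        ≤ ∫⁻ t in E, (eε + (ENNReal.ofReal (Real.exp (ℓ t)) - eε)) ∂P' :=
      lintegral_mono fun t => le_add_tsub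
    have step3 : ∫⁻ t in E, (eε + (ENNReal.ofReal (Real.exp (ℓ t)) - eε)) ∂P'
        = eε * P' E + ∫⁻ t in E, (ENNReal.ofReal (Real.exp (ℓ t)) - eε) ∂P' := by
      rw [lintegral_add_right _ hgmeas, setLIntegral_const]
    have step4 : ∫⁻ t in E, (ENNReal.ofReal (Real.exp (ℓ t)) - eε) ∂P'
        ≤ ∫⁻ t in A, (ENNReal.ofReal (Real.exp (ℓ t)) - eε) ∂P' := by
      have hzero : ∀ t, t ∉ A → ENNReal.ofReal (Real.exp (ℓ t)) - eε = 0 := by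
        intro t ht
        have hle : ℓ t ≤ ε := not_lt.mp ht
        exact tsub_eq_zero_of_le (ENNReal.ofReal_le_ofReal (Real.exp_le_exp.mpr hle))
      calc ∫⁻ t in E, (ENNReal.ofReal (Real.exp (ℓ t)) - eε) ∂P'
          ≤ ∫⁻ t, (ENNReal.ofReal (Real.exp (ℓ t)) - eε) ∂P' := setLIntegral_le_lintegral _ _
        _ = ∫⁻ t in A, (ENNReal.ofReal (Real.exp (ℓ t)) - eε) ∂P' := by
          rw [← lintegral_indicator hAmeas]
          refine lintegral_congr fun t => ?_
          by_cases ht : t ∈ A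
          · rw [Set.indicator_of_mem ht]
          · rw [Set.indicator_of_notMem ht, hzero t ht]
    have step5 : ∫⁻ t in A, (ENNReal.ofReal (Real.exp (ℓ t)) - eε) ∂P' = P A - eε * P' A := by
      rw [lintegral_sub measurable_const ?hfin ?hle]
      · rw [setLIntegral_const]
        congr 1
        rw [htilt, withDensity_apply _ hAmeas]
      case hfin =>
        rw [setLIntegral_const]
        exact ENNReal.mul_ne_top ENNReal.ofReal_ne_top (measure_ne_top P' A)
      case hle =>
        refine (ae_restrict_iff' hAmeas).mpr (ae_of_all _ fun t ht => ?_)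
        exact ENNReal.ofReal_le_ofReal (Real.exp_le_exp.mpr (le_of_lt ht))
    calc P E = ∫⁻ t in E, ENNReal.ofReal (Real.exp (ℓ t)) ∂P' := step1
      _ ≤ ∫⁻ t in E, (eε + (ENNReal.ofReal (Real.exp (ℓ t)) - eε)) ∂P' := step2
      _ = eε * P' E + ∫⁻ t in E, (ENNReal.ofReal (Real.exp (ℓ t)) - eε) ∂P' := step3
      _ ≤ eε * P' E + ∫⁻ t in A, (ENNReal.ofReal (Real.exp (ℓ t)) - eε) ∂P' :=
          add_le_add_right step4 _
      _ = eε * P' E + (P A - eε * P' A) := by rw [step5]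
  -- tail probabilities
  have hwcoe : (↑(∑ i, (⟨(c i)^2, sq_nonneg _⟩ * Real.toNNReal (σ i ^ 2) : ℝ≥0)) : ℝ)
      = ∑ i, (z i - zc i) ^ 2 / σ i ^ 2 := by
    rw [NNReal.coe_sum]
    refine Finset.sum_congr rfl fun i _ => ?_
    change (c i)^2 * ((Real.toNNReal (σ i ^ 2) : ℝ≥0) : ℝ) = _
    rw [hvco i]
    simp only [hc]
    have hσ2 : σ i ^ 2 ≠ 0 := pow_ne_zero 2 (hσ i).ne'
    field_simp
  have hvar_ne : (∑ i, (⟨(c i)^2, sq_nonneg _⟩ * Real.toNNReal (σ i ^ 2) : ℝ≥0)) ≠ 0 := by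
    intro h0
    rw [h0, NNReal.coe_zero] at hwcoe
    exact absurd hwcoe.symm (ne_of_gt hsum_pos)
  have hdot : ∀ w : Fin K → ℝ,
      (Measure.pi fun i => gaussianReal (w i) (Real.toNNReal (σ i ^ 2))) A
        = ENNReal.ofReal (Q ((ε - d - ∑ i, c i * w i) / ρ)) := by
    intro w
    have hAset : A = (fun t : Fin K → ℝ => ∑ i, c i * t i) ⁻¹' Set.Ioi (ε - d) := by
      ext t
      simp only [hA, Set.mem_setOf_eq, Set.mem_preimage, Set.mem_Ioi]
      rw [hℓ_lin t]
      constructor <;> intro h <;> linarith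
    have hm : Measurable fun t : Fin K → ℝ => ∑ i, c i * t i :=
      Finset.measurable_sum Finset.univ fun i _ => by fun_prop
    rw [hAset, ← Measure.map_apply hm measurableSet_Ioi, pi_gaussian_dot,
      gaussianReal_Ioi _ hvar_ne]
    have hsqrt : Real.sqrt
        (↑(∑ i, (⟨(c i)^2, sq_nonneg _⟩ * Real.toNNReal (σ i ^ 2) : ℝ≥0)) : ℝ) = ρ := by
      rw [hwcoe]
    rw [hsqrt]
  have hPA : P A = ENNReal.ofReal (Q (ε / ρ - ρ / 2)) := by
    rw [hPdef, hdot z]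
    congr 2
    have hkey : d + ∑ i, c i * z i = ρ ^ 2 / 2 := by
      rw [hρsq, hd, ← Finset.sum_add_distrib, Finset.sum_div]
      refine Finset.sum_congr rfl fun i _ => ?_
      have hσ2 : σ i ^ 2 ≠ 0 := pow_ne_zero 2 (hσ i).ne'
      rw [hc]
      field_simp
      ring
    have hnum : ε - d - ∑ i, c i * z i = ε - ρ ^ 2 / 2 := by linarith
    rw [hnum]
    have hρne : ρ ≠ 0 := hρpos.ne'
    field_simp
  have hP'A : P' A = ENNReal.ofReal (Q (ε / ρ + ρ / 2)) := by
    rw [hP'def, hdot zc]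
    congr 2
    have hkey : d + ∑ i, c i * z i = ρ ^ 2 / 2 := by
      rw [hρsq, hd, ← Finset.sum_add_distrib, Finset.sum_div]
      refine Finset.sum_congr rfl fun i _ => ?_
      have hσ2 : σ i ^ 2 ≠ 0 := pow_ne_zero 2 (hσ i).ne'
      rw [hc]
      field_simp
      ring
    have hdiff : (∑ i, c i * z i) - ∑ i, c i * zc i = ρ ^ 2 := by
      rw [hρsq, ← Finset.sum_sub_distrib]
      refine Finset.sum_congr rfl fun i _ => ?_
      have hσ2 : σ i ^ 2 ≠ 0 := pow_ne_zero 2 (hσ i).ne'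
      rw [hc]
      field_simp
    have hnum : ε - d - ∑ i, c i * zc i = ε + ρ ^ 2 / 2 := by linarith
    rw [hnum]
    have hρne : ρ ≠ 0 := hρpos.ne'
    field_simp
  -- monotone comparison
  have hQbound : Q (ε / ρ - ρ / 2) - Real.exp ε * Q (ε / ρ + ρ / 2) ≤ δ := by
    have hmono := tradeoff_mono ε (Set.mem_Ioi.mpr hρpos) (Set.mem_Ioi.mpr hμ) hρμ
    exact hmono.trans hpriv
  calc P E ≤ eε * P' E + (P A - eε * P' A) := hPE
    _ ≤ eε * P' E + ENNReal.ofReal δ := by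
      refine add_le_add_right ?_ _
      rw [hPA, hP'A, heε, ← ENNReal.ofReal_mul (Real.exp_nonneg ε),
        ← ENNReal.ofReal_sub _ (mul_nonneg (Real.exp_nonneg ε) (Q_nonneg _))]
      exact ENNReal.ofReal_le_ofReal hQbound
end

section
/- (Optimal variance allocation for the i.n.i.d. Gaussian mechanism, MSE criterion) Let K be a positive integer, μ₀ > 0, and λ_1,…,λ_K > 0. For every σ ∈ (0,∞)^K satisfying Σ_{i=1}^K λ_i²/σ_i² ≤ μ₀², one has Σ_{i=1}^K σ_i² ≥ (Σ_{i=1}^K λ_i)² / μ₀². Moreover, the choice σ_i² = λ_i · (Σ_{j=1}^K λ_j) / μ₀² satisfies the constraint with equality (Σ_i λ_i²/σ_i² = μ₀²) and attains this minimum, i.e. Σ_i σ_i² = (Σ_i λ_i)²/μ₀². -/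
open Finset

/-- Optimal variance allocation for the i.n.i.d. Gaussian mechanism (MSE criterion):
every feasible `σ` satisfies `Σ σ_i² ≥ (Σ λ_i)²/μ₀²`, and the choice
`σ_i² = λ_i (Σ_j λ_j)/μ₀²` meets the privacy constraint with equality and attains the bound. -/
theorem inid_gaussian_optimal_mse (K : ℕ) (hK : 0 < K) (μ₀ : ℝ) (hμ₀ : 0 < μ₀)
    (lam : Fin K → ℝ) (hlam : ∀ i, 0 < lam i) :
    (∀ σ : Fin K → ℝ, (∀ i, 0 < σ i) → (∑ i, lam i ^ 2 / σ i ^ 2) ≤ μ₀ ^ 2 →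
      (∑ i, lam i) ^ 2 / μ₀ ^ 2 ≤ ∑ i, σ i ^ 2) ∧
    (∀ σ : Fin K → ℝ, (∀ i, σ i ^ 2 = lam i * (∑ j, lam j) / μ₀ ^ 2) →
      (∑ i, lam i ^ 2 / σ i ^ 2) = μ₀ ^ 2 ∧ (∑ i, σ i ^ 2) = (∑ i, lam i) ^ 2 / μ₀ ^ 2) := by
  have hS : 0 < ∑ j, lam j :=
    Finset.sum_pos (fun i _ => hlam i) (Finset.univ_nonempty_iff.2 ⟨⟨0, hK⟩⟩)
  constructor
  · intro σ hσ hcon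
    have hcs := Finset.sum_mul_sq_le_sq_mul_sq Finset.univ
      (fun i => lam i / σ i) (fun i => σ i)
    have heq : ∀ i : Fin K, lam i / σ i * σ i = lam i := fun i =>
      div_mul_cancel₀ _ (hσ i).ne'
    have heq2 : ∀ i : Fin K, (lam i / σ i) ^ 2 = lam i ^ 2 / σ i ^ 2 := fun i =>
      div_pow _ _ _
    simp only [heq, heq2] at hcs
    have hσsum : 0 ≤ ∑ i, σ i ^ 2 := Finset.sum_nonneg fun i _ => sq_nonneg _
    have : (∑ i, lam i) ^ 2 ≤ μ₀ ^ 2 * ∑ i, σ i ^ 2 :=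
      hcs.trans (mul_le_mul_of_nonneg_right hcon hσsum)
    rw [div_le_iff₀ (by positivity)]
    linarith [this]
  · intro σ hσ
    have h1 : (∑ i, lam i ^ 2 / σ i ^ 2) = μ₀ ^ 2 := by
      have : ∀ i : Fin K, lam i ^ 2 / σ i ^ 2 = lam i * μ₀ ^ 2 / (∑ j, lam j) := by
        intro i
        have hli := (hlam i).ne'
        have hSn := hS.ne'
        rw [hσ i]
        field_simp
      rw [Finset.sum_congr rfl fun i _ => this i, ← Finset.sum_div,
        ← Finset.sum_mul]
      field_simp
    refine ⟨h1, ?_⟩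
    have : ∀ i : Fin K, σ i ^ 2 = lam i * (∑ j, lam j) / μ₀ ^ 2 := hσ
    rw [Finset.sum_congr rfl fun i _ => this i, ← Finset.sum_div, ← Finset.sum_mul]
    ring
end

section
/- (Optimal variance allocation for the i.n.i.d. Gaussian mechanism, ℓ_p^p criterion) Let K be a positive integer, p ≥ 1 a real number, μ₀ > 0, and λ_1,…,λ_K > 0. For every σ ∈ (0,∞)^K satisfying Σ_{i=1}^K λ_i²/σ_i² ≤ μ₀², one has Σ_{i=1}^K σ_i^p ≥ μ₀^{−p} · ( Σ_{i=1}^K λ_i^{2p/(p+2)} )^{(p+2)/2}. Moreover, the choice σ_i² = μ₀^{−2} · λ_i^{4/(p+2)} · Σ_{j=1}^K λ_j^{2p/(p+2)} satisfies the constraint with equality and attains this lower bound. -/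
open Finset

/-- Optimal variance allocation for the i.n.i.d. Gaussian mechanism (ℓ_p^p criterion):
every feasible `σ` satisfies `Σ σ_i^p ≥ μ₀^{−p} (Σ λ_i^{2p/(p+2)})^{(p+2)/2}`, and the choice
`σ_i² = μ₀^{−2} λ_i^{4/(p+2)} Σ_j λ_j^{2p/(p+2)}` meets the privacy constraint with equality
and attains the bound. -/
theorem inid_gaussian_optimal_lp (K : ℕ) (hK : 0 < K) (p μ₀ : ℝ) (hp : 1 ≤ p) (hμ₀ : 0 < μ₀)
    (lam : Fin K → ℝ) (hlam : ∀ i, 0 < lam i) :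
    (∀ σ : Fin K → ℝ, (∀ i, 0 < σ i) → (∑ i, lam i ^ 2 / σ i ^ 2) ≤ μ₀ ^ 2 →
      μ₀ ^ (-p) * (∑ i, lam i ^ (2 * p / (p + 2))) ^ ((p + 2) / 2) ≤ ∑ i, σ i ^ p) ∧
    (∀ σ : Fin K → ℝ, (∀ i, 0 < σ i) →
      (∀ i, σ i ^ 2 = (μ₀ ^ 2)⁻¹ * lam i ^ (4 / (p + 2)) * ∑ j, lam j ^ (2 * p / (p + 2))) →
      (∑ i, lam i ^ 2 / σ i ^ 2) = μ₀ ^ 2 ∧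
        (∑ i, σ i ^ p) = μ₀ ^ (-p) * (∑ i, lam i ^ (2 * p / (p + 2))) ^ ((p + 2) / 2)) := by
  have hp0 : (0:ℝ) < p := lt_of_lt_of_le one_pos hp
  have hp2 : (0:ℝ) < p + 2 := by linarith
  have hp2' : (p:ℝ) + 2 ≠ 0 := hp2.ne'
  have hpne : (p:ℝ) ≠ 0 := hp0.ne'
  haveI : Nonempty (Fin K) := Fin.pos_iff_nonempty.mp hK
  set e : ℝ := 2 * p / (p + 2) with he
  have he0 : 0 < e := by positivity
  set T : ℝ := ∑ i, lam i ^ e with hTdef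
  have hT : 0 < T :=
    Finset.sum_pos (fun i _ => Real.rpow_pos_of_pos (hlam i) e) Finset.univ_nonempty
  have hμp : (0:ℝ) < μ₀ ^ p := Real.rpow_pos_of_pos hμ₀ p
  have hminv : ((μ₀ ^ 2)⁻¹ : ℝ) = μ₀ ^ (-2 : ℝ) := by
    rw [Real.rpow_neg hμ₀.le, Real.rpow_two]
  constructor
  · intro σ hσ hcon
    set A : ℝ := ∑ i, σ i ^ p with hAdef
    have hA : 0 < A :=
      Finset.sum_pos (fun i _ => Real.rpow_pos_of_pos (hσ i) p) Finset.univ_nonempty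
    have hconj : Real.HolderConjugate ((p+2)/2) ((p+2)/p) := by
      constructor
      · rw [inv_div, inv_div, inv_one]
        field_simp
        ring
      · positivity
      · positivity
    have key := Real.inner_le_Lp_mul_Lq_of_nonneg (f := fun i => σ i ^ e)
      (g := fun i => (lam i / σ i) ^ e) Finset.univ hconj
      (fun i _ => (Real.rpow_pos_of_pos (hσ i) e).le)
      (fun i _ => (Real.rpow_pos_of_pos (div_pos (hlam i) (hσ i)) e).le)
    have h1 : ∀ i : Fin K, σ i ^ e * (lam i / σ i) ^ e = lam i ^ e := fun i => by
      rw [← Real.mul_rpow (hσ i).le (div_pos (hlam i) (hσ i)).le,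
        mul_div_cancel₀ _ (hσ i).ne']
    have hee : e * ((p+2)/2) = p := by rw [he]; field_simp
    have hee2 : e * ((p+2)/p) = 2 := by rw [he]; field_simp
    have h2 : ∀ i : Fin K, (σ i ^ e) ^ ((p+2)/2) = σ i ^ p := fun i => by
      rw [← Real.rpow_mul (hσ i).le, hee]
    have h3 : ∀ i : Fin K, ((lam i / σ i) ^ e) ^ ((p+2)/p) = lam i ^ 2 / σ i ^ 2 := fun i => by
      rw [← Real.rpow_mul (div_pos (hlam i) (hσ i)).le, hee2, Real.rpow_two, div_pow]
    simp only [h1, h2, h3] at key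
    have hB : (0:ℝ) ≤ ∑ i, lam i ^ 2 / σ i ^ 2 :=
      Finset.sum_nonneg fun i _ => by positivity
    have step : T ≤ A ^ (1/((p+2)/2)) * (μ₀ ^ 2) ^ (1/((p+2)/p)) := by
      refine key.trans (mul_le_mul_of_nonneg_left ?_ (Real.rpow_nonneg hA.le _))
      exact Real.rpow_le_rpow hB hcon (by positivity)
    have step2 : T ^ ((p+2)/2) ≤
        (A ^ (1/((p+2)/2)) * (μ₀ ^ 2) ^ (1/((p+2)/p))) ^ ((p+2)/2) :=
      Real.rpow_le_rpow hT.le step (by positivity)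
    have hrhs : (A ^ (1/((p+2)/2)) * (μ₀ ^ 2) ^ (1/((p+2)/p))) ^ ((p+2)/2)
        = A * μ₀ ^ p := by
      rw [Real.mul_rpow (Real.rpow_nonneg hA.le _) (Real.rpow_nonneg (by positivity) _),
        ← Real.rpow_mul hA.le, ← Real.rpow_mul (by positivity : (0:ℝ) ≤ μ₀ ^ 2)]
      have e1 : 1/((p+2)/2) * ((p+2)/2) = 1 := by field_simp
      have e2 : 1/((p+2)/p) * ((p+2)/2) = p / 2 := by field_simp
      rw [e1, e2, Real.rpow_one]
      congr 1
      rw [← Real.rpow_two, ← Real.rpow_mul hμ₀.le]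
      congr 1
      ring
    rw [hrhs] at step2
    rw [Real.rpow_neg hμ₀.le]
    calc (μ₀ ^ p)⁻¹ * T ^ ((p+2)/2) ≤ (μ₀ ^ p)⁻¹ * (A * μ₀ ^ p) :=
          mul_le_mul_of_nonneg_left step2 (by positivity)
      _ = A := by rw [mul_comm A, inv_mul_cancel_left₀ hμp.ne']
  · intro σ hσ hσ2
    have hs2 : ∀ i : Fin K, lam i ^ 2 / σ i ^ 2 = μ₀ ^ 2 * lam i ^ e / T := by
      intro i
      rw [hσ2 i]
      have hl := hlam i
      have h4 : (0:ℝ) < lam i ^ (4/(p+2)) := Real.rpow_pos_of_pos hl _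
      have hsplit : lam i ^ 2 = lam i ^ (4/(p+2)) * lam i ^ e := by
        rw [← Real.rpow_two, ← Real.rpow_add hl]
        congr 1
        rw [he]; field_simp; ring
      rw [hsplit]
      field_simp
    have hsum1 : (∑ i, lam i ^ 2 / σ i ^ 2) = μ₀ ^ 2 := by
      simp only [hs2]
      rw [← Finset.sum_div, ← Finset.mul_sum, ← hTdef, mul_div_assoc,
        div_self hT.ne', mul_one]
    refine ⟨hsum1, ?_⟩
    have hsp : ∀ i : Fin K, σ i ^ p = μ₀ ^ (-p) * lam i ^ e * T ^ (p/2) := by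
      intro i
      have h2' : σ i ^ p = (σ i ^ 2) ^ (p/2) := by
        rw [← Real.rpow_two, ← Real.rpow_mul (hσ i).le]
        congr 1
        ring
      have ea : (-2:ℝ) * (p/2) = -p := by ring
      have eb : 4/(p+2) * (p/2) = e := by rw [he]; field_simp; ring
      rw [h2', hσ2 i, hminv,
        Real.mul_rpow (mul_nonneg (Real.rpow_nonneg hμ₀.le _)
          (Real.rpow_nonneg (hlam i).le _)) hT.le,
        Real.mul_rpow (Real.rpow_nonneg hμ₀.le _) (Real.rpow_nonneg (hlam i).le _),
        ← Real.rpow_mul hμ₀.le, ← Real.rpow_mul (hlam i).le, ea, eb]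
    calc (∑ i, σ i ^ p) = ∑ i, μ₀ ^ (-p) * lam i ^ e * T ^ (p/2) :=
          Finset.sum_congr rfl fun i _ => hsp i
      _ = μ₀ ^ (-p) * T * T ^ (p/2) := by
          rw [← Finset.sum_mul, ← Finset.mul_sum]
      _ = μ₀ ^ (-p) * T ^ ((p+2)/2) := by
          rw [mul_assoc]
          congr 1
          rw [show (p+2)/2 = 1 + p/2 by ring,
            Real.rpow_one_add' hT.le (by positivity)]
end

section
/- (Optimal scale allocation for the i.n.i.d. Laplace mechanism, MSE criterion) Let K be a positive integer, ε > 0, and λ_1,…,λ_K > 0. For every β ∈ (0,∞)^K satisfying Σ_{i=1}^K λ_i/β_i ≤ ε, one has Σ_{i=1}^K β_i² ≥ ε^{−2} · ( Σ_{i=1}^K λ_i^{2/3} )³. Moreover, the choice β_i = ε^{−1} · λ_i^{1/3} · Σ_{j=1}^K λ_j^{2/3} satisfies the constraint with equality (Σ_i λ_i/β_i = ε) and attains this minimum. -/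
open Finset

/-- Optimal scale allocation for the i.n.i.d. Laplace mechanism (MSE criterion):
every feasible `β` satisfies `Σ β_i² ≥ ε^{−2} (Σ λ_i^{2/3})³`, and the choice
`β_i = ε^{−1} λ_i^{1/3} Σ_j λ_j^{2/3}` meets the privacy constraint with equality and
attains the bound. -/
theorem inid_laplace_optimal_mse (K : ℕ) (hK : 0 < K) (ε : ℝ) (hε : 0 < ε)
    (lam : Fin K → ℝ) (hlam : ∀ i, 0 < lam i) :
    (∀ β : Fin K → ℝ, (∀ i, 0 < β i) → (∑ i, lam i / β i) ≤ ε →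
      (ε ^ 2)⁻¹ * (∑ i, lam i ^ ((2 : ℝ) / 3)) ^ 3 ≤ ∑ i, β i ^ 2) ∧
    (∀ β : Fin K → ℝ, (∀ i, β i = ε⁻¹ * lam i ^ ((1 : ℝ) / 3) * ∑ j, lam j ^ ((2 : ℝ) / 3)) →
      (∑ i, lam i / β i) = ε ∧
        (∑ i, β i ^ 2) = (ε ^ 2)⁻¹ * (∑ i, lam i ^ ((2 : ℝ) / 3)) ^ 3) := by
  have hSpos : 0 < ∑ j, lam j ^ ((2 : ℝ) / 3) := by
    apply Finset.sum_pos (fun j _ => Real.rpow_pos_of_pos (hlam j) _)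
    exact univ_nonempty_iff.mpr ⟨⟨0, hK⟩⟩
  constructor
  · intro β hβ hcon
    set S := ∑ i, lam i ^ ((2 : ℝ) / 3) with hS
    set A := ∑ i, β i ^ 2 with hA
    have hA0 : 0 ≤ A := Finset.sum_nonneg fun i _ => sq_nonneg _
    have hC0 : 0 ≤ ∑ i, lam i / β i :=
      Finset.sum_nonneg fun i _ => le_of_lt (div_pos (hlam i) (hβ i))
    have hpq : Real.HolderConjugate 3 (3/2) := Real.holderConjugate_iff.mpr ⟨by norm_num, by norm_num⟩
    have hold := Real.inner_le_Lp_mul_Lq_of_nonneg (s := (univ : Finset (Fin K))) hpq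
      (f := fun i => (β i ^ 2) ^ ((1:ℝ)/3)) (g := fun i => (lam i / β i) ^ ((2:ℝ)/3))
      (fun i _ => Real.rpow_nonneg (sq_nonneg _) _)
      (fun i _ => Real.rpow_nonneg (le_of_lt (div_pos (hlam i) (hβ i))) _)
    have h1 : ∀ i : Fin K, (β i ^ 2) ^ ((1:ℝ)/3) * (lam i / β i) ^ ((2:ℝ)/3)
        = lam i ^ ((2:ℝ)/3) := by
      intro i
      rw [Real.div_rpow (hlam i).le (hβ i).le, ← Real.rpow_natCast (β i) 2,
        ← Real.rpow_mul (hβ i).le]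
      norm_num
      have hb := (Real.rpow_pos_of_pos (hβ i) ((2:ℝ)/3)).ne'
      field_simp
    have h2 : ∀ i : Fin K, ((β i ^ 2) ^ ((1:ℝ)/3)) ^ (3:ℝ) = β i ^ 2 := by
      intro i
      rw [← Real.rpow_mul (sq_nonneg _)]
      norm_num
    have h3 : ∀ i : Fin K, ((lam i / β i) ^ ((2:ℝ)/3)) ^ ((3:ℝ)/2) = lam i / β i := by
      intro i
      rw [← Real.rpow_mul (le_of_lt (div_pos (hlam i) (hβ i)))]
      norm_num
    simp only [h1, h2, h3] at hold
    have hold2 : S ≤ A ^ ((1:ℝ)/3) * ε ^ ((2:ℝ)/3) := by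
      refine hold.trans ?_
      have : ((1:ℝ)/(3/2)) = 2/3 := by norm_num
      rw [this]
      gcongr
    have hS0 : 0 ≤ S := hSpos.le
    have hcube := Real.rpow_le_rpow hS0 hold2 (by norm_num : (0:ℝ) ≤ 3)
    have hrhs : (A ^ ((1:ℝ)/3) * ε ^ ((2:ℝ)/3)) ^ (3:ℝ) = A * ε ^ 2 := by
      rw [Real.mul_rpow (Real.rpow_nonneg hA0 _) (Real.rpow_nonneg hε.le _),
        ← Real.rpow_mul hA0, ← Real.rpow_mul hε.le]
      norm_num
    rw [hrhs] at hcube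
    have hScube : S ^ (3:ℝ) = S ^ 3 := by
      rw [show ((3:ℝ)) = ((3:ℕ):ℝ) by norm_num, Real.rpow_natCast]
    rw [hScube] at hcube
    rw [inv_mul_le_iff₀ (by positivity : (0:ℝ) < ε ^ 2)]
    linarith [hcube]
  · intro β hβ
    set S := ∑ j, lam j ^ ((2 : ℝ) / 3) with hS
    have hβval : ∀ i, β i = ε⁻¹ * lam i ^ ((1:ℝ)/3) * S := hβ
    constructor
    · have key : ∀ i : Fin K, lam i ^ ((2:ℝ)/3) * lam i ^ ((1:ℝ)/3) = lam i := by
        intro i; rw [← Real.rpow_add (hlam i)]; norm_num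
      have : ∀ i : Fin K, lam i / β i = ε * (lam i ^ ((2:ℝ)/3) / S) := by
        intro i
        have hb0 : 0 < ε⁻¹ * lam i ^ ((1:ℝ)/3) * S :=
          mul_pos (mul_pos (inv_pos.mpr hε) (Real.rpow_pos_of_pos (hlam i) _)) hSpos
        rw [hβval i, div_eq_iff (ne_of_gt hb0)]
        field_simp
        linear_combination (-1 : ℝ) * key i
      rw [Finset.sum_congr rfl fun i _ => this i, ← Finset.mul_sum, ← Finset.sum_div]
      rw [← hS, div_self (ne_of_gt hSpos), mul_one]
    · have : ∀ i : Fin K, β i ^ 2 = (ε ^ 2)⁻¹ * lam i ^ ((2:ℝ)/3) * S ^ 2 := by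
        intro i
        rw [hβval i]
        have : (lam i ^ ((1:ℝ)/3)) ^ 2 = lam i ^ ((2:ℝ)/3) := by
          rw [← Real.rpow_natCast (lam i ^ ((1:ℝ)/3)) 2, ← Real.rpow_mul (hlam i).le]
          norm_num
        rw [mul_pow, mul_pow, this, inv_pow]
      calc ∑ i, β i ^ 2 = ∑ i, (ε ^ 2)⁻¹ * lam i ^ ((2:ℝ)/3) * S ^ 2 :=
            Finset.sum_congr rfl fun i _ => this i
        _ = (ε ^ 2)⁻¹ * S ^ 2 * ∑ i, lam i ^ ((2:ℝ)/3) := by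
            rw [Finset.mul_sum]; exact Finset.sum_congr rfl fun i _ => by ring
        _ = (ε ^ 2)⁻¹ * (∑ i, lam i ^ ((2 : ℝ) / 3)) ^ 3 := by rw [← hS]; ring
end

section
/- (Optimal scale allocation for the i.n.i.d. Laplace mechanism, ℓ_p^p criterion) Let K be a positive integer, p ≥ 1 a real number, ε > 0, and λ_1,…,λ_K > 0. For every β ∈ (0,∞)^K satisfying Σ_{i=1}^K λ_i/β_i ≤ ε, one has Σ_{i=1}^K β_i^p ≥ ε^{−p} · ( Σ_{i=1}^K λ_i^{p/(p+1)} )^{p+1}. Moreover, the choice β_i = ε^{−1} · λ_i^{1/(p+1)} · Σ_{j=1}^K λ_j^{p/(p+1)} satisfies the constraint with equality and attains this lower bound. -/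
open Finset

/-- Optimal scale allocation for the i.n.i.d. Laplace mechanism (ℓ_p^p criterion):
every feasible `β` satisfies `Σ β_i^p ≥ ε^{−p} (Σ λ_i^{p/(p+1)})^{p+1}`, and the choice
`β_i = ε^{−1} λ_i^{1/(p+1)} Σ_j λ_j^{p/(p+1)}` meets the privacy constraint with equality
and attains the bound. -/
theorem inid_laplace_optimal_lp (K : ℕ) (hK : 0 < K) (p ε : ℝ) (hp : 1 ≤ p) (hε : 0 < ε)
    (lam : Fin K → ℝ) (hlam : ∀ i, 0 < lam i) :
    (∀ β : Fin K → ℝ, (∀ i, 0 < β i) → (∑ i, lam i / β i) ≤ ε →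
      ε ^ (-p) * (∑ i, lam i ^ (p / (p + 1))) ^ (p + 1) ≤ ∑ i, β i ^ p) ∧
    (∀ β : Fin K → ℝ,
      (∀ i, β i = ε⁻¹ * lam i ^ (1 / (p + 1)) * ∑ j, lam j ^ (p / (p + 1))) →
      (∑ i, lam i / β i) = ε ∧
        (∑ i, β i ^ p) = ε ^ (-p) * (∑ i, lam i ^ (p / (p + 1))) ^ (p + 1)) := by
  have hp0 : 0 < p := lt_of_lt_of_le one_pos hp
  have hp1 : (0:ℝ) < p + 1 := by linarith
  have hS : 0 < ∑ i, lam i ^ (p / (p + 1)) := by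
    apply Finset.sum_pos (fun i _ => Real.rpow_pos_of_pos (hlam i) _)
    exact Finset.univ_nonempty_iff.mpr ⟨⟨0, hK⟩⟩
  set S : ℝ := ∑ i, lam i ^ (p / (p + 1)) with hSdef
  constructor
  · intro β hβ hfeas
    have hpq : Real.HolderConjugate ((p + 1) / p) (p + 1) := by
      rw [Real.holderConjugate_iff]
      constructor
      · rw [lt_div_iff₀ hp0]; linarith
      · rw [inv_div]
        field_simp
    have hA0 : 0 ≤ ∑ i, lam i / β i :=
      Finset.sum_nonneg fun i _ => le_of_lt (div_pos (hlam i) (hβ i))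
    have hB0 : 0 ≤ ∑ i, β i ^ p :=
      Finset.sum_nonneg fun i _ => Real.rpow_nonneg (le_of_lt (hβ i)) _
    have hold := Real.inner_le_Lp_mul_Lq_of_nonneg (Finset.univ)
      (f := fun i => (lam i / β i) ^ (p / (p + 1)))
      (g := fun i => (β i) ^ (p / (p + 1))) hpq
      (fun i _ => Real.rpow_nonneg (le_of_lt (div_pos (hlam i) (hβ i))) _)
      (fun i _ => Real.rpow_nonneg (le_of_lt (hβ i)) _)
    have h1 : ∀ i : Fin K, (lam i / β i) ^ (p / (p + 1)) * (β i) ^ (p / (p + 1))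
        = lam i ^ (p / (p + 1)) := fun i => by
      rw [← Real.mul_rpow (le_of_lt (div_pos (hlam i) (hβ i))) (le_of_lt (hβ i)),
        div_mul_cancel₀ _ (ne_of_gt (hβ i))]
    have h2 : ∀ i : Fin K, ((lam i / β i) ^ (p / (p + 1))) ^ ((p + 1) / p)
        = lam i / β i := fun i => by
      rw [← Real.rpow_mul (le_of_lt (div_pos (hlam i) (hβ i)))]
      rw [div_mul_div_comm, mul_comm, div_self (by positivity), Real.rpow_one]
    have h3 : ∀ i : Fin K, ((β i) ^ (p / (p + 1))) ^ (p + 1) = (β i) ^ p := fun i => by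
      rw [← Real.rpow_mul (le_of_lt (hβ i)), div_mul_cancel₀ _ (ne_of_gt hp1)]
    simp only [h1, h2, h3] at hold
    have key : S ^ (p + 1) ≤ (∑ i, lam i / β i) ^ p * ∑ i, β i ^ p := by
      calc S ^ (p + 1)
          ≤ ((∑ i, lam i / β i) ^ (1 / ((p + 1) / p)) *
              (∑ i, β i ^ p) ^ (1 / (p + 1))) ^ (p + 1) := by
            apply Real.rpow_le_rpow (le_of_lt hS) hold (le_of_lt hp1)
        _ = (∑ i, lam i / β i) ^ p * ∑ i, β i ^ p := by
            rw [Real.mul_rpow (Real.rpow_nonneg hA0 _) (Real.rpow_nonneg hB0 _),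
              ← Real.rpow_mul hA0, ← Real.rpow_mul hB0,
              one_div (p + 1), inv_mul_cancel₀ (ne_of_gt hp1), Real.rpow_one,
              one_div, inv_div, div_mul_cancel₀ _ (ne_of_gt hp1)]
    have key2 : (∑ i, lam i / β i) ^ p * ∑ i, β i ^ p ≤ ε ^ p * ∑ i, β i ^ p := by
      apply mul_le_mul_of_nonneg_right _ hB0
      exact Real.rpow_le_rpow hA0 hfeas (le_of_lt hp0)
    have hεp : ε ^ (-p) * ε ^ p = 1 := by
      rw [← Real.rpow_add hε]; simp
    calc ε ^ (-p) * S ^ (p + 1)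
        ≤ ε ^ (-p) * (ε ^ p * ∑ i, β i ^ p) := by
          apply mul_le_mul_of_nonneg_left (le_trans key key2)
          exact Real.rpow_nonneg (le_of_lt hε) _
      _ = ∑ i, β i ^ p := by rw [← mul_assoc, hεp, one_mul]
  · intro β hβ
    have hexp : p / (p + 1) + 1 / (p + 1) = 1 := by field_simp
    have hterm : ∀ i : Fin K, lam i / β i = ε * lam i ^ (p / (p + 1)) / S := fun i => by
      have hd : lam i ^ (p / (p + 1)) = lam i / lam i ^ (1 / (p + 1)) := by
        have h' : p / (p + 1) = 1 - 1 / (p + 1) := by field_simp; ring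
        rw [h', Real.rpow_sub (hlam i), Real.rpow_one]
      have h1 : lam i ^ (1 / (p + 1)) ≠ 0 :=
        ne_of_gt (Real.rpow_pos_of_pos (hlam i) _)
      rw [hβ i, hd]
      field_simp
    constructor
    · simp only [hterm]
      rw [← Finset.sum_div, ← Finset.mul_sum, ← hSdef,
        mul_div_assoc, div_self (ne_of_gt hS), mul_one]
    · have hterm2 : ∀ i : Fin K, β i ^ p = ε ^ (-p) * (lam i ^ (p / (p + 1)) * S ^ p) :=
        fun i => by
        rw [hβ i,
          Real.mul_rpow (mul_nonneg (inv_nonneg.mpr hε.le)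
            (Real.rpow_nonneg (hlam i).le _)) (le_of_lt hS),
          Real.mul_rpow (inv_nonneg.mpr hε.le) (Real.rpow_nonneg (le_of_lt (hlam i)) _),
          ← Real.rpow_mul (le_of_lt (hlam i)),
          Real.inv_rpow (le_of_lt hε), ← Real.rpow_neg (le_of_lt hε),
          one_div, inv_mul_eq_div]
        ring
      simp only [hterm2]
      rw [← Finset.mul_sum, ← Finset.sum_mul, ← hSdef, mul_comm S (S ^ p),
        ← Real.rpow_add_one (ne_of_gt hS)]
end

section
/- Let K be a positive integer, ε ≥ 0, β_1,…,β_K > 0, λ_1,…,λ_K ≥ 0, and let g(t) = Π_{i=1}^K (2β_i)^{−1} exp(−|t_i|/β_i) be the product Laplace density on ℝ^K. Then for every d ∈ ℝ^K with |d_i| ≤ λ_i for all i, ∫_{ℝ^K} max( g(t) − e^ε · g(t + d), 0 ) dt ≤ max( 1 − exp( ε − Σ_{i=1}^K λ_i/β_i ), 0 ). -/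
open MeasureTheory Real Set

lemma lap_integrable_aux {b : ℝ} (hb : 0 < b) :
    Integrable (fun x : ℝ => Real.exp (-|x| / b)) := by
  have h1 : IntegrableOn (fun x : ℝ => Real.exp (-|x| / b)) (Ioi 0) := by
    refine (exp_neg_integrableOn_Ioi 0 (b := b⁻¹) (by positivity)).congr_fun
      (fun x hx => ?_) measurableSet_Ioi
    rw [abs_of_pos hx]
    congr 1
    field_simp
  have h2 : IntegrableOn (fun x : ℝ => Real.exp (-|x| / b)) (Iic 0) := by
    rw [← Measure.map_neg_eq_self (volume : Measure ℝ)]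
    have m : MeasurableEmbedding fun x : ℝ => -x :=
      (Homeomorph.neg ℝ).measurableEmbedding
    rw [m.integrableOn_map_iff]
    simp_rw [Function.comp_def, abs_neg, neg_preimage, neg_Iic, neg_zero]
    exact Iff.mpr integrableOn_Ici_iff_integrableOn_Ioi h1
  have h := h2.union h1
  rwa [Iic_union_Ioi, integrableOn_univ] at h

lemma lap_integral_aux {b : ℝ} (hb : 0 < b) :
    ∫ x : ℝ, (2 * b)⁻¹ * Real.exp (-|x| / b) = 1 := by
  rw [integral_const_mul]
  have h0 : ∫ x in Ioi (0 : ℝ), Real.exp (-x / b) = b := by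
    have h := integral_comp_mul_left_Ioi (fun y : ℝ => Real.exp (-y)) 0
      (b := b⁻¹) (by positivity)
    simp only [mul_zero] at h
    rw [integral_exp_neg_Ioi 0] at h
    simp only [neg_zero, Real.exp_zero, smul_eq_mul, mul_one, inv_inv] at h
    calc ∫ x in Ioi (0 : ℝ), Real.exp (-x / b)
        = ∫ x in Ioi (0 : ℝ), Real.exp (-(b⁻¹ * x)) := by
          refine setIntegral_congr_fun measurableSet_Ioi (fun x _ => ?_)
          rw [inv_mul_eq_div, neg_div]
      _ = b := h
  have h1 : ∫ x : ℝ, Real.exp (-|x| / b) = 2 * b := by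
    rw [integral_comp_abs (f := fun y : ℝ => Real.exp (-y / b)), h0]
  rw [h1]
  field_simp

/-- Privacy-profile bound for the product Laplace density: for every shift `d` with
`|d_i| ≤ λ_i`, `∫ [g(t) − e^ε g(t+d)]_+ dt ≤ [1 − exp(ε − Σ_i λ_i/β_i)]_+`. -/
theorem laplace_privacy_profile_bound (K : ℕ) (hK : 0 < K) (ε : ℝ) (hε : 0 ≤ ε)
    (β lam : Fin K → ℝ) (hβ : ∀ i, 0 < β i) (hlam : ∀ i, 0 ≤ lam i)
    (d : Fin K → ℝ) (hd : ∀ i, |d i| ≤ lam i) :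
    (∫ t : Fin K → ℝ,
        max ((∏ i, (2 * β i)⁻¹ * Real.exp (-|t i| / β i)) -
            Real.exp ε * ∏ i, (2 * β i)⁻¹ * Real.exp (-|(t + d) i| / β i)) 0) ≤
      max (1 - Real.exp (ε - ∑ i, lam i / β i)) 0 := by
  set g : (Fin K → ℝ) → ℝ := fun t => ∏ i, (2 * β i)⁻¹ * Real.exp (-|t i| / β i) with hgdef
  set C : ℝ := max (1 - Real.exp (ε - ∑ i, lam i / β i)) 0 with hCdef
  have hC0 : 0 ≤ C := le_max_right _ _
  have hgnn : ∀ t, 0 ≤ g t := fun t =>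
    Finset.prod_nonneg fun i _ => by have := hβ i; positivity
  -- pointwise bound
  have hpt : ∀ t : Fin K → ℝ,
      max (g t - Real.exp ε * ∏ i, (2 * β i)⁻¹ * Real.exp (-|(t + d) i| / β i)) 0
        ≤ g t * C := by
    intro t
    refine max_le ?_ (mul_nonneg (hgnn t) hC0)
    have hshift : g t * Real.exp (-(∑ i, lam i / β i))
        ≤ ∏ i, (2 * β i)⁻¹ * Real.exp (-|(t + d) i| / β i) := by
      have : g t * Real.exp (-(∑ i, lam i / β i)) =
          ∏ i, ((2 * β i)⁻¹ * Real.exp (-|t i| / β i) * Real.exp (-(lam i / β i))) := by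
        rw [Finset.prod_mul_distrib, ← Real.exp_sum]
        simp [hgdef, Finset.sum_neg_distrib]
      rw [this]
      refine Finset.prod_le_prod (fun i _ => ?_) (fun i _ => ?_)
      · have := hβ i; positivity
      · have hβi := hβ i
        rw [mul_assoc, ← Real.exp_add]
        have h2 : (0:ℝ) ≤ (2 * β i)⁻¹ := by positivity
        refine mul_le_mul_of_nonneg_left (Real.exp_le_exp.mpr ?_) h2
        have habs : |(t + d) i| ≤ |t i| + lam i := by
          simp only [Pi.add_apply]
          calc |t i + d i| ≤ |t i| + |d i| := abs_add_le _ _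
            _ ≤ |t i| + lam i := by linarith [hd i]
        have heq : -|t i| / β i + -(lam i / β i) = -(|t i| + lam i) / β i := by ring
        rw [heq]
        gcongr
    calc g t - Real.exp ε * ∏ i, (2 * β i)⁻¹ * Real.exp (-|(t + d) i| / β i)
        ≤ g t - Real.exp ε * (g t * Real.exp (-(∑ i, lam i / β i))) := by
          have := Real.exp_pos ε
          nlinarith [hshift]
      _ = g t * (1 - Real.exp (ε - ∑ i, lam i / β i)) := by
          rw [Real.exp_sub]
          rw [Real.exp_neg]
          field_simp
      _ ≤ g t * C := by
          exact mul_le_mul_of_nonneg_left (le_max_left _ _) (hgnn t)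
  -- integrability of g
  have hgint : Integrable g := by
    apply Integrable.fintype_prod (f := fun i x => (2 * β i)⁻¹ * Real.exp (-|x| / β i))
    intro i
    exact (lap_integrable_aux (hβ i)).const_mul _
  have hgone : ∫ t, g t = 1 := by
    rw [hgdef]
    refine (integral_fintype_prod_eq_prod
      (f := fun i x => (2 * β i)⁻¹ * Real.exp (-|x| / β i)) (μ := fun _ => volume)).trans ?_
    exact Finset.prod_eq_one fun i _ => lap_integral_aux (hβ i)
  calc (∫ t : Fin K → ℝ,
        max ((∏ i, (2 * β i)⁻¹ * Real.exp (-|t i| / β i)) -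
            Real.exp ε * ∏ i, (2 * β i)⁻¹ * Real.exp (-|(t + d) i| / β i)) 0)
      ≤ ∫ t, g t * C := by
        refine integral_mono_of_nonneg (ae_of_all _ fun t => le_max_right _ _)
          (hgint.mul_const C) (ae_of_all _ hpt)
    _ = C := by rw [integral_mul_const, hgone, one_mul]
end

section
/- ((ε,δ)-DP of the i.n.i.d. Laplace mechanism) Let K be a positive integer, ε ≥ 0, δ ∈ (0,1), and λ_1,…,λ_K > 0. Set β_i = λ_i^{1/3} · ( Σ_{j=1}^K λ_j^{2/3} ) / ( ε − log(1−δ) ) for each i. Let T be a random vector in ℝ^K whose law has density g(t) = Π_{i=1}^K (2β_i)^{−1} exp(−|t_i|/β_i) with respect to Lebesgue measure. Then for all z, ž ∈ ℝ^K with |z_i − ž_i| ≤ λ_i for every i, and every Borel set E ⊆ ℝ^K, P(z + T ∈ E) ≤ e^ε · P(ž + T ∈ E) + δ. -/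
open MeasureTheory Real
open Set
open scoped ENNReal

lemma laplace1_integrable {b : ℝ} (hb : 0 < b) :
    Integrable (fun t : ℝ => (2 * b)⁻¹ * Real.exp (-|t| / b)) := by
  have hIoi : IntegrableOn (fun t : ℝ => Real.exp (-|t| / b)) (Ioi 0) := by
    refine (exp_neg_integrableOn_Ioi 0 (inv_pos.2 hb)).congr_fun ?_ measurableSet_Ioi
    intro t ht
    simp only []
    rw [abs_of_pos ht, div_eq_mul_inv, neg_mul]
    ring_nf
  have hIic : IntegrableOn (fun t : ℝ => Real.exp (-|t| / b)) (Iic 0) := by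
    rw [← Measure.map_neg_eq_self (volume : Measure ℝ)]
    have m : MeasurableEmbedding fun x : ℝ => -x := (Homeomorph.neg ℝ).measurableEmbedding
    rw [m.integrableOn_map_iff]
    simp_rw [Function.comp_def, abs_neg, neg_preimage, neg_Iic, neg_zero]
    exact Iff.mpr integrableOn_Ici_iff_integrableOn_Ioi hIoi
  have := hIic.union hIoi
  rw [Iic_union_Ioi] at this
  exact (integrableOn_univ.mp this).const_mul _

lemma laplace1_integral {b : ℝ} (hb : 0 < b) :
    ∫ t : ℝ, (2 * b)⁻¹ * Real.exp (-|t| / b) = 1 := by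
  rw [integral_const_mul]
  have h1 : ∫ t : ℝ, Real.exp (-|t| / b) = 2 * ∫ x in Ioi (0:ℝ), Real.exp (-x / b) :=
    integral_comp_abs (f := fun x => Real.exp (-x / b))
  have h2 : ∫ x in Ioi (0:ℝ), Real.exp (-x / b) = b := by
    have := integral_comp_mul_right_Ioi (fun y => Real.exp (-y)) 0 (inv_pos.2 hb)
    simp only [zero_mul, integral_exp_neg_Ioi_zero, inv_inv, smul_eq_mul, mul_one] at this
    have heq : ∫ x in Ioi (0:ℝ), Real.exp (-x / b) = ∫ x in Ioi (0:ℝ), Real.exp (-(x * b⁻¹)) :=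
      setIntegral_congr_fun measurableSet_Ioi fun x _ => by rw [div_eq_mul_inv, neg_mul]
    rw [heq, this]
  rw [h1, h2]
  field_simp


/-- (ε,δ)-DP of the i.n.i.d. Laplace mechanism with scales
`β_i = λ_i^{1/3} (Σ_j λ_j^{2/3}) / (ε − log(1−δ))`. -/
theorem inid_laplace_approxDP (K : ℕ) (hK : 0 < K) (ε δ : ℝ) (hε : 0 ≤ ε)
    (hδ : δ ∈ Set.Ioo (0 : ℝ) 1) (lam β : Fin K → ℝ) (hlam : ∀ i, 0 < lam i)
    (hβ : ∀ i, β i =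
      lam i ^ ((1 : ℝ) / 3) * (∑ j, lam j ^ ((2 : ℝ) / 3)) / (ε - Real.log (1 - δ))) :
    ∀ z zc : Fin K → ℝ, (∀ i, |z i - zc i| ≤ lam i) →
      ∀ E : Set (Fin K → ℝ), MeasurableSet E →
        (volume.withDensity fun t : Fin K → ℝ =>
            ENNReal.ofReal (∏ i, (2 * β i)⁻¹ * Real.exp (-|t i| / β i))) {t | z + t ∈ E} ≤
          ENNReal.ofReal (Real.exp ε) *
              (volume.withDensity fun t : Fin K → ℝ =>
                  ENNReal.ofReal (∏ i, (2 * β i)⁻¹ * Real.exp (-|t i| / β i)))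
                {t | zc + t ∈ E} +
            ENNReal.ofReal δ := by
  intro z zc hz E hE
  obtain ⟨hδ0, hδ1⟩ := hδ
  have h1δ : (0:ℝ) < 1 - δ := by linarith
  set ε' : ℝ := ε - Real.log (1 - δ) with hε'def
  have hlog : Real.log (1 - δ) < 0 := Real.log_neg h1δ (by linarith)
  have hε' : 0 < ε' := by simp only [hε'def]; linarith
  haveI : Nonempty (Fin K) := ⟨⟨0, hK⟩⟩
  have hS : 0 < ∑ j, lam j ^ ((2:ℝ)/3) :=
    Finset.sum_pos (fun j _ => Real.rpow_pos_of_pos (hlam j) _) Finset.univ_nonempty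
  have hβpos : ∀ i, 0 < β i := fun i => by
    rw [hβ i]
    exact div_pos (mul_pos (Real.rpow_pos_of_pos (hlam i) _) hS) hε'
  -- sum of sensitivities over scales
  have hsum : ∑ i, lam i / β i = ε' := by
    have h : ∀ i, lam i / β i = lam i ^ ((2:ℝ)/3) * ε' / ∑ j, lam j ^ ((2:ℝ)/3) := by
      intro i
      have hsplit : lam i = lam i ^ ((1:ℝ)/3) * lam i ^ ((2:ℝ)/3) := by
        rw [← Real.rpow_add (hlam i)]
        norm_num
      rw [hβ i, div_div_eq_mul_div,
        div_eq_div_iff (ne_of_gt (mul_pos (Real.rpow_pos_of_pos (hlam i) _) hS)) (ne_of_gt hS)]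
      nth_rewrite 1 [hsplit]
      ring
    rw [Finset.sum_congr rfl (fun i _ => h i), ← Finset.sum_div, ← Finset.sum_mul]
    field_simp
  -- the density and sets
  set f : (Fin K → ℝ) → ℝ := fun t => ∏ i, (2 * β i)⁻¹ * Real.exp (-|t i| / β i) with hf
  set g : (Fin K → ℝ) → ℝ≥0∞ := fun t => ENNReal.ofReal (f t) with hg
  set μ : Measure (Fin K → ℝ) := volume.withDensity g with hμ
  have hfnonneg : ∀ t, 0 ≤ f t := fun t =>
    Finset.prod_nonneg fun i _ =>
      mul_nonneg (inv_nonneg.2 (by linarith [hβpos i])) (Real.exp_nonneg _)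
  set A : Set (Fin K → ℝ) := {t | z + t ∈ E} with hA
  set B : Set (Fin K → ℝ) := {t | zc + t ∈ E} with hB
  have hAm : MeasurableSet A := (measurable_id.const_add z) hE
  have hBm : MeasurableSet B := (measurable_id.const_add zc) hE
  -- pointwise density shift bound
  have hpt : ∀ t : Fin K → ℝ, f (t + (zc - z)) ≤ Real.exp ε' * f t := by
    intro t
    have hstep : ∀ i, (2 * β i)⁻¹ * Real.exp (-|t i + (zc i - z i)| / β i) ≤
        Real.exp (lam i / β i) * ((2 * β i)⁻¹ * Real.exp (-|t i| / β i)) := by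
      intro i
      have habs : |t i| - |t i + (zc i - z i)| ≤ lam i := by
        have h1 : |t i| - |t i + (zc i - z i)| ≤ |t i - (t i + (zc i - z i))| :=
          abs_sub_abs_le_abs_sub _ _
        have h2 : |t i - (t i + (zc i - z i))| = |z i - zc i| := by
          rw [show t i - (t i + (zc i - z i)) = z i - zc i by ring]
        linarith [hz i, h1.trans_eq h2]
      have hβi := hβpos i
      have hexp : Real.exp (-|t i + (zc i - z i)| / β i) ≤
          Real.exp (lam i / β i) * Real.exp (-|t i| / β i) := by
        rw [← Real.exp_add]
        apply Real.exp_le_exp.2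
        rw [← add_div]
        gcongr
        linarith
      calc (2 * β i)⁻¹ * Real.exp (-|t i + (zc i - z i)| / β i)
          ≤ (2 * β i)⁻¹ * (Real.exp (lam i / β i) * Real.exp (-|t i| / β i)) := by
            apply mul_le_mul_of_nonneg_left hexp (inv_nonneg.2 (by linarith))
        _ = Real.exp (lam i / β i) * ((2 * β i)⁻¹ * Real.exp (-|t i| / β i)) := by ring
    calc f (t + (zc - z))
        = ∏ i, (2 * β i)⁻¹ * Real.exp (-|t i + (zc i - z i)| / β i) := rfl
      _ ≤ ∏ i, Real.exp (lam i / β i) * ((2 * β i)⁻¹ * Real.exp (-|t i| / β i)) :=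
          Finset.prod_le_prod (fun i _ =>
            mul_nonneg (inv_nonneg.2 (by linarith [hβpos i])) (Real.exp_nonneg _))
            (fun i _ => hstep i)
      _ = (∏ i, Real.exp (lam i / β i)) * ∏ i, (2 * β i)⁻¹ * Real.exp (-|t i| / β i) :=
          Finset.prod_mul_distrib
      _ = Real.exp ε' * f t := by rw [← Real.exp_sum, hsum]
  -- pure DP step
  have key : μ A ≤ ENNReal.ofReal (Real.exp ε') * μ B := by
    have hμA : μ A = ∫⁻ t, A.indicator g t := by
      rw [hμ, withDensity_apply _ hAm, ← lintegral_indicator hAm]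
    have hμB : μ B = ∫⁻ t, B.indicator g t := by
      rw [hμ, withDensity_apply _ hBm, ← lintegral_indicator hBm]
    rw [hμA, hμB]
    rw [← lintegral_add_right_eq_self (fun t => A.indicator g t) (zc - z)]
    have hind : ∀ t, A.indicator g (t + (zc - z)) = B.indicator (fun s => g (s + (zc - z))) t := by
      intro t
      have hmem : t + (zc - z) ∈ A ↔ t ∈ B := by
        have heq : z + (t + (zc - z)) = zc + t := by
          funext i
          simp only [Pi.add_apply, Pi.sub_apply]
          ring
        simp only [hA, hB, Set.mem_setOf_eq, heq]
      by_cases ht : t ∈ B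
      · rw [Set.indicator_of_mem (hmem.2 ht), Set.indicator_of_mem ht]
      · rw [Set.indicator_of_notMem (fun h => ht (hmem.1 h)), Set.indicator_of_notMem ht]
    calc ∫⁻ t, A.indicator g (t + (zc - z))
        = ∫⁻ t, B.indicator (fun s => g (s + (zc - z))) t := by
          exact lintegral_congr hind
      _ ≤ ∫⁻ t, B.indicator (fun s => ENNReal.ofReal (Real.exp ε') * g s) t := by
          apply lintegral_mono
          intro t
          apply Set.indicator_le_indicator
          simp only [hg]
          rw [← ENNReal.ofReal_mul (Real.exp_nonneg _)]
          exact ENNReal.ofReal_le_ofReal (hpt t)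
      _ = ENNReal.ofReal (Real.exp ε') * ∫⁻ t, B.indicator g t := by
          rw [← lintegral_const_mul' _ _ ENNReal.ofReal_ne_top]
          congr 1
          funext t
          by_cases ht : t ∈ B <;> simp [Set.indicator_of_mem, Set.indicator_of_notMem, ht]
  -- normalization
  have hμuniv : μ Set.univ = 1 := by
    rw [hμ, withDensity_apply _ MeasurableSet.univ, Measure.restrict_univ]
    have hint : Integrable f := by
      have := Integrable.fin_nat_prod (E := fun _ : Fin K => ℝ)
        (f := fun i (x : ℝ) => (2 * β i)⁻¹ * Real.exp (-|x| / β i))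
        (fun i => laplace1_integrable (hβpos i))
      exact this
    have hval : ∫ t, f t = 1 := by
      rw [hf]
      beta_reduce
      rw [MeasureTheory.volume_pi]
      rw [MeasureTheory.integral_fin_nat_prod_eq_prod
        (f := fun i (x : ℝ) => (2 * β i)⁻¹ * Real.exp (-|x| / β i))]
      exact Finset.prod_eq_one fun i _ => laplace1_integral (hβpos i)
    rw [← ofReal_integral_eq_lintegral_ofReal hint (Filter.Eventually.of_forall hfnonneg),
      hval, ENNReal.ofReal_one]
  have hμB1 : μ B ≤ 1 := hμuniv ▸ measure_mono (Set.subset_univ B)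
  have hμA1 : μ A ≤ 1 := hμuniv ▸ measure_mono (Set.subset_univ A)
  -- final arithmetic
  have hexpε' : Real.exp ε' = Real.exp ε / (1 - δ) := by
    rw [hε'def, Real.exp_sub, Real.exp_log h1δ]
  rcases le_total (ENNReal.ofReal (Real.exp ε) * μ B) (ENNReal.ofReal (1 - δ)) with h | h
  · -- small case
    have hsplitexp : Real.exp ε' = Real.exp ε + (δ / (1 - δ)) * Real.exp ε := by
      rw [hexpε']
      field_simp
      ring
    calc μ A ≤ ENNReal.ofReal (Real.exp ε') * μ B := key
      _ = (ENNReal.ofReal (Real.exp ε) + ENNReal.ofReal ((δ / (1 - δ)) * Real.exp ε)) * μ B := by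
          rw [← ENNReal.ofReal_add (Real.exp_nonneg _) (by positivity), ← hsplitexp]
      _ = ENNReal.ofReal (Real.exp ε) * μ B +
          ENNReal.ofReal (δ / (1 - δ)) * (ENNReal.ofReal (Real.exp ε) * μ B) := by
          rw [add_mul, ENNReal.ofReal_mul (by positivity), mul_assoc]
      _ ≤ ENNReal.ofReal (Real.exp ε) * μ B +
          ENNReal.ofReal (δ / (1 - δ)) * ENNReal.ofReal (1 - δ) := by
          exact add_le_add_right (mul_le_mul_right h _) _
      _ = ENNReal.ofReal (Real.exp ε) * μ B + ENNReal.ofReal δ := by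
          rw [← ENNReal.ofReal_mul (by positivity), div_mul_cancel₀ _ (ne_of_gt h1δ)]
  · -- large case
    calc μ A ≤ 1 := hμA1
      _ = ENNReal.ofReal (1 - δ) + ENNReal.ofReal δ := by
          rw [← ENNReal.ofReal_add (by linarith) (le_of_lt hδ0)]
          norm_num
      _ ≤ ENNReal.ofReal (Real.exp ε) * μ B + ENNReal.ofReal δ := add_le_add_left h _
end
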